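/- arXiv:1609.06433 — 8 statements merged into one kernel-verified Lean document; each statement's English description precedes it below -/
import Mathlib

section
/- For every integer k ≥ 1, the ring ℤ² has exactly one subring of index k; that is, f_2(k) = 1 for all k ≥ 1. -/
open scoped BigOperators

/-- The number of subrings with identity of `ℤ^n` (componentwise operations)
of additive index `k`. -/
noncomputable def numSubrings (n k : ℕ) : ℕ :=
  Nat.card {S : Subring (Fin n → ℤ) // S.toAddSubgroup.index = k}

/-- The number of irreducible subrings of `ℤ^n` of index `p ^ e`: subrings of
additive index `p ^ e` all of whose elements have all coordinates congruent
modulo `p`. -/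
noncomputable def numIrrSubrings (n p e : ℕ) : ℕ :=
  Nat.card {S : Subring (Fin n → ℤ) //
    S.toAddSubgroup.index = p ^ e ∧
    ∀ x ∈ S, ∀ i j : Fin n, (p : ℤ) ∣ x i - x j}

/-- An integer matrix is in Hermite normal form if it is upper triangular and
`0 ≤ a i j < a i i` for `i < j`. -/
def IsHermiteNormalForm {n : ℕ} (A : Matrix (Fin n) (Fin n) ℤ) : Prop :=
  (∀ i j : Fin n, j < i → A i j = 0) ∧
  ∀ i j : Fin n, i < j → 0 ≤ A i j ∧ A i j < A i i

/-- A subring matrix is a matrix in Hermite normal form such that the all-ones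
vector lies in the ℤ-span of its columns and the componentwise product of any
two columns lies in the ℤ-span of its columns. -/
def IsSubringMatrix {n : ℕ} (A : Matrix (Fin n) (Fin n) ℤ) : Prop :=
  IsHermiteNormalForm A ∧
  (1 : Fin n → ℤ) ∈ Set.range A.mulVec ∧
  ∀ j k : Fin n, (fun i => A i j * A i k) ∈ Set.range A.mulVec

/-- For a composition `α` of length `m`, the number of `(m+1) × (m+1)` subring
matrices with diagonal `(p ^ α 0, …, p ^ α (m-1), 1)`, all entries of the first
`m` columns divisible by `p`, and last column `(1,…,1)ᵀ`. -/
noncomputable def gComp (p : ℕ) {m : ℕ} (α : Fin m → ℕ) : ℕ :=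
  Nat.card {A : Matrix (Fin (m + 1)) (Fin (m + 1)) ℤ //
    IsSubringMatrix A ∧
    (∀ i : Fin m, A i.castSucc i.castSucc = (p : ℤ) ^ α i) ∧
    (∀ i : Fin (m + 1), ∀ j : Fin m, (p : ℤ) ∣ A i j.castSucc) ∧
    ∀ i : Fin (m + 1), A i (Fin.last m) = 1}


/-- difference of coordinates homomorphism -/
def diffHom : (Fin 2 → ℤ) →+ ℤ :=
  AddMonoidHom.mk' (fun x => x 0 - x 1) (by intro a b; simp [Pi.add_apply]; ring)

lemma diffHom_surj : Function.Surjective diffHom := by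
  intro z; exact ⟨![z, 0], by simp [diffHom]⟩

/-- canonical subring of index d -/
def Tsub (d : ℤ) : Subring (Fin 2 → ℤ) where
  carrier := {x | d ∣ x 0 - x 1}
  zero_mem' := by simp
  one_mem' := by simp
  add_mem' := by
    rintro a b ⟨c, hc⟩ ⟨e, he⟩
    exact ⟨c + e, by simp only [Pi.add_apply]; linarith⟩
  neg_mem' := by
    rintro a ⟨c, hc⟩
    exact ⟨-c, by simp only [Pi.neg_apply]; linarith⟩
  mul_mem' := by
    rintro a b ⟨c, hc⟩ ⟨e, he⟩
    exact ⟨a 0 * e + b 1 * c, by simp only [Pi.mul_apply]; linear_combination a 0 * he + b 1 * hc⟩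

lemma Tsub_toAddSubgroup (d : ℤ) :
    (Tsub d).toAddSubgroup = (AddSubgroup.zmultiples d).comap diffHom := by
  ext x
  simp [Tsub, diffHom, AddSubgroup.mem_zmultiples_iff, Dvd.dvd, eq_comm, mul_comm]

lemma Tsub_index (d : ℤ) : (Tsub d).toAddSubgroup.index = d.natAbs := by
  rw [Tsub_toAddSubgroup, AddSubgroup.index_comap_of_surjective _ diffHom_surj,
    Int.index_zmultiples]

lemma key (S : Subring (Fin 2 → ℤ)) : ∃ d : ℤ, S = Tsub d := by
  obtain ⟨d, hd⟩ := Int.subgroup_cyclic (S.toAddSubgroup.map diffHom)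
  refine ⟨d, ?_⟩
  have hd' : S.toAddSubgroup.map diffHom = AddSubgroup.zmultiples d := by
    rw [hd, AddSubgroup.zmultiples_eq_closure]
  -- get s ∈ S with diffHom s = d
  have hdmem : d ∈ S.toAddSubgroup.map diffHom := by
    rw [hd']; exact AddSubgroup.mem_zmultiples d
  obtain ⟨s, hs, hsd⟩ := hdmem
  apply le_antisymm
  · intro x hx
    have : diffHom x ∈ AddSubgroup.zmultiples d := by
      rw [← hd']; exact ⟨x, hx, rfl⟩
    obtain ⟨c, hc⟩ := this
    exact ⟨c, by simpa [diffHom, mul_comm, eq_comm] using hc⟩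
  · rintro x ⟨c, hc⟩
    -- x = (x 1) • 1 + c • (s - (s 1) • 1)
    have h1 : (1 : Fin 2 → ℤ) ∈ S := S.one_mem
    have hmem : (x 1) • (1 : Fin 2 → ℤ) + c • (s - (s 1) • 1) ∈ S := by
      exact S.toAddSubgroup.add_mem (AddSubgroup.zsmul_mem _ h1 _)
        (AddSubgroup.zsmul_mem _ (S.toAddSubgroup.sub_mem hs (AddSubgroup.zsmul_mem _ h1 _)) _)
    convert hmem using 1
    have hsd' : s 0 - s 1 = d := hsd
    funext i
    fin_cases i <;>
        simp [Pi.add_apply, Pi.sub_apply, Pi.smul_apply, smul_eq_mul]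
    · rw [show s 0 - s 1 = d from hsd']; linarith

theorem f_2_eq_one (k : ℕ) (hk : 1 ≤ k) : numSubrings 2 k = 1 := by
  rw [numSubrings, Nat.card_eq_one_iff_unique]
  constructor
  · constructor
    rintro ⟨S, hS⟩ ⟨S', hS'⟩
    obtain ⟨d, rfl⟩ := key S
    obtain ⟨d', rfl⟩ := key S'
    rw [Tsub_index] at hS hS'
    have : d.natAbs = d'.natAbs := hS.trans hS'.symm
    ext1
    rcases Int.natAbs_eq_natAbs_iff.mp this with h | h <;> subst h
    · rfl
    · ext x; constructor <;> rintro ⟨c, hc⟩ <;> exact ⟨-c, by linarith⟩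
  · exact ⟨⟨Tsub k, by rw [Tsub_index]; simp⟩⟩
end

section
/- Let p be a prime, n ≥ 2, e ≥ 1, and let A be an n×n subring matrix with det(A) = p^e. Then every vector x = (x_1,…,x_n) in the ℤ-span of the columns of A satisfies x_1 ≡ x_2 ≡ ⋯ ≡ x_n (mod p) if and only if every entry of the first n−1 columns of A is divisible by p and the last column of A equals (1,…,1)^T. -/
open scoped BigOperators

/-!
Write `c` for the last column of `A`. Since `A` is upper triangular, the last coordinate of a vector
`A *ᵥ w` is `A_{nn} w_n`, so `1 ∈ range A` makes `A_{nn}` a unit, hence `A_{nn} = 1` because the other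
diagonal entries and `det A` are positive. If all coordinates of lattice vectors agree mod `p`, comparing
the coordinates `i` and `n` of the columns gives `p ∣ A_{ij}` for `j < n` and `c_i ≡ 1 (mod p)`.
To see that `c = 1`, take the largest `i` with `c_i ≠ 1`: the lattice vector `c ∘ c - c` vanishes below
row `i`, and back substitution shows that `A_{ii}` divides its `i`-th coordinate `c_i (c_i - 1)`. As
`A_{ii} ∣ p^e` and `p ∤ c_i`, we get `A_{ii} ∣ c_i - 1`, while `1 ≤ c_i < A_{ii}` by the Hermite normal
form; so `c_i = 1` after all. The converse holds because it holds for every column.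
-/

open Matrix

namespace Matrix.IsUpperTriangular

variable {m R : Type*} [Fintype m] [LinearOrder m] [CommRing R] {A : Matrix m m R}

theorem mulVec_apply_of_forall_lt (hA : A.IsUpperTriangular) {t : m → R} {k : m}
    (ht : ∀ j, k < j → t j = 0) : (A *ᵥ t) k = A k k * t k := by
  refine Finset.sum_eq_single k (fun j _ hjk => ?_) (by simp)
  rcases hjk.lt_or_gt with h | h
  · exact mul_eq_zero_of_left (hA h) _
  · rw [ht j h, mul_zero]

theorem dvd_mulVec_apply [NoZeroDivisors R] (hA : A.IsUpperTriangular) (hdiag : ∀ i, A i i ≠ 0)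
    {t : m → R} {i : m} (h : ∀ k, i < k → (A *ᵥ t) k = 0) : A i i ∣ (A *ᵥ t) i := by
  have ht : ∀ k, i < k → t k = 0 := by
    intro k
    induction k using WellFoundedGT.induction with
    | _ k ih =>
      intro hik
      have hk := h k hik
      rw [hA.mulVec_apply_of_forall_lt fun j hkj => ih j hkj (hik.trans hkj)] at hk
      exact (mul_eq_zero.1 hk).resolve_left (hdiag k)
  exact ⟨t i, hA.mulVec_apply_of_forall_lt ht⟩

end Matrix.IsUpperTriangular

theorem Matrix.dvd_mulVec_apply_sub_mulVec_apply {m n R : Type*} [Fintype n] [CommRing R]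
    (A : Matrix m n R) {d : R} (h : ∀ i j k, d ∣ A i k - A j k) (v : n → R) (i j : m) :
    d ∣ (A *ᵥ v) i - (A *ᵥ v) j := by
  rw [mulVec, mulVec, dotProduct, dotProduct, ← Finset.sum_sub_distrib]
  exact Finset.dvd_sum fun k _ => by rw [← sub_mul]; exact (h i j k).mul_right _

namespace IsHermiteNormalForm

variable {n : ℕ} {A : Matrix (Fin n) (Fin n) ℤ}

theorem isUpperTriangular (hA : IsHermiteNormalForm A) : A.IsUpperTriangular :=
  fun i j h => hA.1 i j h

theorem diag_pos_of_lt (hA : IsHermiteNormalForm A) {i j : Fin n} (hij : i < j) : 0 < A i i :=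
  (hA.2 i j hij).1.trans_lt (hA.2 i j hij).2

end IsHermiteNormalForm

namespace IsSubringMatrix

open Fin

variable {m : ℕ} {A : Matrix (Fin (m + 1)) (Fin (m + 1)) ℤ}

theorem isUnit_last_last (hA : IsSubringMatrix A) : IsUnit (A (last m) (last m)) := by
  obtain ⟨w, hw⟩ := hA.2.1
  refine .of_mul_eq_one (w (last m)) ?_
  rw [← hA.1.isUpperTriangular.mulVec_apply_of_forall_lt fun j h => absurd h (le_last j).not_gt,
    hw, Pi.one_apply]

theorem last_last_eq_one (hA : IsSubringMatrix A) (hdet : 0 < A.det) :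
    A (last m) (last m) = 1 := by
  have hprod : 0 < ∏ i : Fin m, A i.castSucc i.castSucc :=
    Finset.prod_pos fun i _ => hA.1.diag_pos_of_lt (castSucc_lt_last i)
  rw [det_of_isUpperTriangular hA.1.isUpperTriangular, prod_univ_castSucc] at hdet
  rcases Int.isUnit_iff.1 hA.isUnit_last_last with h | h
  · exact h
  · rw [h] at hdet; linarith

theorem col_last_eq_one {p e : ℕ} (hA : IsSubringMatrix A) (hp : p.Prime)
    (hdet : A.det = (p : ℤ) ^ e) (hcong : ∀ i, (p : ℤ) ∣ A i (last m) - A (last m) (last m))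
    (i : Fin (m + 1)) :
    A i (last m) = 1 := by
  have hp' : Prime (p : ℤ) := Nat.prime_iff_prime_int.mp hp
  have htri := hA.1.isUpperTriangular
  have hpe : (0 : ℤ) < (p : ℤ) ^ e := pow_pos (by exact_mod_cast hp.pos) e
  rw [hA.last_last_eq_one (hdet ▸ hpe)] at hcong
  have hprod : ∏ i, A i i = (p : ℤ) ^ e := (det_of_isUpperTriangular htri).symm.trans hdet
  have hdiag : ∀ i, A i i ≠ 0 := fun i =>
    (Finset.prod_ne_zero_iff (f := fun i => A i i)).1 (hprod ▸ hpe.ne') i (Finset.mem_univ i)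
  induction i using WellFoundedGT.induction with
  | _ i ih =>
  rcases (le_last i).lt_or_eq with hi | rfl
  swap
  · exact hA.last_last_eq_one (hdet ▸ hpe)
  obtain ⟨v, hv⟩ := hA.2.2 (last m) (last m)
  -- `A *ᵥ (v - e_n) = c ∘ c - c`, which vanishes below row `i` by induction
  have hdvd : A i i ∣ A i (last m) * (A i (last m) - 1) := by
    have := htri.dvd_mulVec_apply hdiag (t := v - Pi.single (last m) 1) (i := i)
      fun k hk => by simp [mulVec_sub, hv, ih k hk]
    simpa [mulVec_sub, hv, mulVec_single_one, mul_sub] using this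
  have hndvd : ¬ (p : ℤ) ∣ A i (last m) := fun h =>
    hp'.not_dvd_one (by simpa using dvd_sub h (hcong i))
  have hcop : IsCoprime (A i i) (A i (last m)) :=
    ((hp'.coprime_iff_not_dvd.2 hndvd).pow_left (m := e)).of_isCoprime_of_dvd_left
      (hprod ▸ Finset.dvd_prod_of_mem (fun i => A i i) (Finset.mem_univ i))
  have hne : A i (last m) ≠ 0 := fun h => hndvd (h ▸ dvd_zero _)
  obtain ⟨hnonneg, hlt⟩ := hA.1.2 i (last m) hi
  have := Int.eq_zero_of_dvd_of_nonneg_of_lt (by omega) (by omega)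
    (hcop.dvd_of_dvd_mul_left hdvd)
  omega

end IsSubringMatrix

theorem irreducible_subring_matrix_iff_general (p n e : ℕ) (hp : p.Prime)
    (A : Matrix (Fin n) (Fin n) ℤ) (hA : IsSubringMatrix A)
    (hdet : A.det = (p : ℤ) ^ e) :
    (∀ x ∈ Set.range A.mulVec, ∀ i j : Fin n, (p : ℤ) ∣ x i - x j) ↔
      ∀ i j : Fin n,
        ((j : ℕ) < n - 1 → (p : ℤ) ∣ A i j) ∧ ((j : ℕ) = n - 1 → A i j = 1) := by
  obtain _ | m := n
  · exact iff_of_true (fun _ _ i => i.elim0) fun i => i.elim0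
  have hcol (j : Fin (m + 1)) : (fun i => A i j) ∈ Set.range A.mulVec :=
    ⟨Pi.single j 1, mulVec_single_one A j⟩
  have hlast (j : Fin (m + 1)) :
      ((j : ℕ) < m + 1 - 1 ↔ j < Fin.last m) ∧ ((j : ℕ) = m + 1 - 1 ↔ j = Fin.last m) :=
    ⟨by simp [Fin.lt_def], by simp [Fin.ext_iff]⟩
  simp only [hlast]
  constructor
  · intro h i j
    refine ⟨fun hj => by simpa [hA.1.1 _ _ hj] using h _ (hcol j) i (Fin.last m), ?_⟩
    rintro rfl
    exact hA.col_last_eq_one hp hdet (fun i => h _ (hcol _) i (Fin.last m)) i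
  · rintro h _ ⟨v, rfl⟩ i j
    refine A.dvd_mulVec_apply_sub_mulVec_apply (fun i j k => ?_) v i j
    rcases (Fin.le_last k).lt_or_eq with hk | rfl
    · exact dvd_sub ((h i k).1 hk) ((h j k).1 hk)
    · simp [(h i _).2 rfl, (h j _).2 rfl]

theorem irreducible_subring_matrix_iff (p n e : ℕ) (hp : p.Prime) (hn : 2 ≤ n)
    (he : 1 ≤ e) (A : Matrix (Fin n) (Fin n) ℤ) (hA : IsSubringMatrix A)
    (hdet : A.det = (p : ℤ) ^ e) :
    (∀ x ∈ Set.range A.mulVec, ∀ i j : Fin n, (p : ℤ) ∣ x i - x j) ↔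
      ∀ i j : Fin n,
        ((j : ℕ) < n - 1 → (p : ℤ) ∣ A i j) ∧ ((j : ℕ) = n - 1 → A i j = 1) :=
  irreducible_subring_matrix_iff_general p n e hp A hA hdet
end

section
/- For every prime p and every integer n ≥ 1: (i) g_n(p^e) = 0 for all e with 0 ≤ e < n−1; (ii) g_{n+1}(p^n) = 1; and (iii) g_n(p^n) = (p^{n−1} − 1)/(p − 1). -/
/-!
Every irreducible subring lies in `D = congrSubring p n = {x | ∀ i j, x i ≡ x j [ZMOD p]}`, a
subring of index `p ^ (n - 1)`; this gives (i), and (ii) since a subgroup of `D` of the same index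
is `D`.

For (iii), an irreducible subring `S` of index `p ^ n` has index `p` in `D`, so it contains `1`
and `p • D`, hence `K = congrSubring (p ^ 2) n = ℤ • 1 + p • D`. Conversely every additive
subgroup between `K` and `D` is a subring: writing `x = a • 1 + p • u`, `y = b • 1 + p • v`,
`x * y = a • y + b • x - (a * b) • 1 + p ^ 2 • (u * v)`. Since `D / K ≅ (ZMod p) ^ (n - 1)`
via `x ↦ (x (i + 1) - x 0) / p`, these subrings are the hyperplanes of `(ZMod p) ^ (n - 1)`, which
are counted as the points of the projective space of its dual.
-/

open scoped BigOperators

open Module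

theorem Module.natCard_dual {k V : Type*} [Field k] [AddCommGroup V] [Module k V] [Finite V] :
    Nat.card (Dual k V) = Nat.card V := by
  have : Module.Finite k V := Module.Finite.of_finite
  rw [natCard_eq_pow_finrank (K := k) (V := Dual k V), Subspace.dual_finrank_eq,
    ← natCard_eq_pow_finrank]

section Hyperplanes

variable {k V : Type*} [Field k] [Finite k] [AddCommGroup V] [Module k V] [Finite V]

theorem Submodule.index_eq_card_iff_finrank_dualAnnihilator_eq_one (W : Submodule k V) :
    W.toAddSubgroup.index = Nat.card k ↔ finrank k W.dualAnnihilator = 1 := by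
  have : Module.Finite k V := Module.Finite.of_finite
  rw [← (Subspace.quotEquivAnnihilator W).finrank_eq, AddSubgroup.index,
    ← Nat.pow_eq_self_iff (Finite.one_lt_card (α := k))]
  exact Eq.congr_left (natCard_eq_pow_finrank (K := k) (V := V ⧸ W))

variable (k V) in
theorem Submodule.natCard_index_eq_card :
    Nat.card {W : Submodule k V // W.toAddSubgroup.index = Nat.card k} =
      (Nat.card V - 1) / (Nat.card k - 1) := by
  have : Module.Finite k V := Module.Finite.of_finite
  let e : {W : Submodule k V // W.toAddSubgroup.index = Nat.card k} ≃
      Projectivization k (Dual k V) :=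
    (((Subspace.orderIsoFiniteDimensional (K := k) (V := V)).toEquiv.trans
      OrderDual.ofDual).subtypeEquiv
        Submodule.index_eq_card_iff_finrank_dualAnnihilator_eq_one).trans
      (Projectivization.equivSubmodule k _).symm
  rw [Nat.card_congr e, Projectivization.card'', natCard_dual]

end Hyperplanes

theorem AddSubgroup.natCard_index_eq_prime {V : Type*} [AddCommGroup V] [Finite V]
    (p : ℕ) [Fact p.Prime] [Module (ZMod p) V] :
    Nat.card {W : AddSubgroup V // W.index = p} = (Nat.card V - 1) / (p - 1) := by
  rw [← Nat.card_zmod p, ← Submodule.natCard_index_eq_card]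
  exact Nat.card_congr ((AddSubgroup.toZModSubmodule p).toEquiv.subtypeEquiv fun _ => Iff.rfl)

def congrSubring (q n : ℕ) : Subring (Fin n → ℤ) where
  carrier := {x | ∀ i j, (q : ℤ) ∣ x i - x j}
  zero_mem' _ _ := by simp
  one_mem' _ _ := by simp
  add_mem' hx hy i j := by simpa [add_sub_add_comm] using dvd_add (hx i j) (hy i j)
  neg_mem' hx i j := by rw [Pi.neg_apply, Pi.neg_apply, neg_sub_neg]; exact hx j i
  mul_mem' hx hy i j :=
    ((Int.modEq_iff_dvd.2 (hx i j)).mul (Int.modEq_iff_dvd.2 (hy i j))).dvd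

namespace congrSubring

variable {q n m : ℕ}

lemma mem_iff_forall_dvd_sub_zero {x : Fin (m + 1) → ℤ} :
    x ∈ congrSubring q (m + 1) ↔ ∀ i, (q : ℤ) ∣ x i - x 0 :=
  ⟨fun h i => h i 0, fun h i j => by simpa using dvd_sub (h i) (h j)⟩

lemma le_of_dvd {a b : ℕ} (h : a ∣ b) : congrSubring b n ≤ congrSubring a n :=
  fun _ hx i j => (Int.natCast_dvd_natCast.2 h).trans (hx i j)

lemma natCast_smul_mem (u : Fin n → ℤ) : (q : ℤ) • u ∈ congrSubring q n := fun i j => by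
  simp [← mul_sub]

lemma exists_eq_smul_one_add_smul {r : ℕ} {x : Fin n → ℤ}
    (hx : x ∈ congrSubring (q * r) n) :
    ∃ a : ℤ, ∃ u ∈ congrSubring r n, x = a • 1 + (q : ℤ) • u := by
  rcases n with _ | m
  · exact ⟨0, 0, zero_mem _, Subsingleton.elim _ _⟩
  choose w hw using fun i => hx i 0
  refine ⟨x 0, fun i => r * w i, fun i j => ⟨w i - w j, by ring⟩, funext fun i => ?_⟩
  simp only [Pi.add_apply, Pi.smul_apply, Pi.one_apply, smul_eq_mul]
  push_cast at hw
  linear_combination hw i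

def diffHom (q m : ℕ) : (Fin (m + 1) → ℤ) →+ (Fin m → ZMod q) :=
  AddMonoidHom.pi fun i => (Int.castAddHom (ZMod q)).comp
    (Pi.evalAddMonoidHom (fun _ => ℤ) i.succ - Pi.evalAddMonoidHom (fun _ => ℤ) 0)

lemma ker_diffHom : (diffHom q m).ker = (congrSubring q (m + 1)).toAddSubgroup := by
  ext x
  simp [diffHom, funext_iff, ← Int.cast_sub, ZMod.intCast_zmod_eq_zero_iff_dvd,
    mem_iff_forall_dvd_sub_zero, Fin.forall_fin_succ]

lemma diffHom_surjective [NeZero q] : Function.Surjective (diffHom q m) := fun v =>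
  ⟨Fin.cons 0 fun i => ((v i).val : ℤ), funext fun i => by simp [diffHom]⟩

lemma index_congrSubring [NeZero q] : (congrSubring q (m + 1)).toAddSubgroup.index = q ^ m := by
  rw [← ker_diffHom, AddSubgroup.index_ker, AddMonoidHom.range_eq_top.2 diffHom_surjective,
    AddSubgroup.card_top, Nat.card_fun, Nat.card_zmod, Nat.card_fin]

lemma mul_mem_of_le_of_le {H : AddSubgroup (Fin n → ℤ)}
    (hK : (congrSubring (q ^ 2) n).toAddSubgroup ≤ H)
    (hD : H ≤ (congrSubring q n).toAddSubgroup)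
    {x y : Fin n → ℤ} (hx : x ∈ H) (hy : y ∈ H) : x * y ∈ H := by
  obtain ⟨a, u, -, rfl⟩ := exists_eq_smul_one_add_smul (r := 1) (by simpa using hD hx)
  obtain ⟨b, v, -, rfl⟩ := exists_eq_smul_one_add_smul (r := 1) (by simpa using hD hy)
  have h1 : (1 : Fin n → ℤ) ∈ H := hK (Subring.one_mem _)
  have huv : ((q ^ 2 : ℕ) : ℤ) • (u * v) ∈ H := hK (natCast_smul_mem _)
  have key : (a • 1 + (q : ℤ) • u) * (b • 1 + (q : ℤ) • v) =
      a • (b • 1 + (q : ℤ) • v) + b • (a • 1 + (q : ℤ) • u) - (a * b) • 1 +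
        ((q ^ 2 : ℕ) : ℤ) • (u * v) := by
    ext i
    simp only [Pi.mul_apply, Pi.add_apply, Pi.sub_apply, Pi.smul_apply, Pi.one_apply, smul_eq_mul]
    push_cast
    ring
  rw [key]
  exact add_mem (sub_mem (add_mem (H.zsmul_mem hy a) (H.zsmul_mem hx b)) (H.zsmul_mem h1 _)) huv

def subringOfLE (H : AddSubgroup (Fin n → ℤ))
    (hK : (congrSubring (q ^ 2) n).toAddSubgroup ≤ H)
    (hD : H ≤ (congrSubring q n).toAddSubgroup) :
    Subring (Fin n → ℤ) :=
  { H with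
    one_mem' := hK (Subring.one_mem _)
    mul_mem' := mul_mem_of_le_of_le hK hD }

lemma sq_le_of_relIndex_dvd {S : Subring (Fin n → ℤ)}
    (hS : S.toAddSubgroup.relIndex (congrSubring q n).toAddSubgroup ∣ q) :
    congrSubring (q ^ 2) n ≤ S := by
  intro x hx
  obtain ⟨a, u, hu, rfl⟩ := exists_eq_smul_one_add_smul (r := q) (by rwa [← sq])
  obtain ⟨k, hk⟩ := hS
  have hmem := AddSubgroup.nsmul_index_mem
    (S.toAddSubgroup.addSubgroupOf (congrSubring q n).toAddSubgroup) ⟨u, hu⟩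
  have hqu : (q : ℤ) • u =
      k • (S.toAddSubgroup.relIndex (congrSubring q n).toAddSubgroup • u) := by
    rw [smul_smul, mul_comm, ← hk, natCast_zsmul]
  rw [hqu]
  exact add_mem (S.zsmul_mem S.one_mem a) (S.toAddSubgroup.nsmul_mem hmem k)

def divDiffHom (q m : ℕ) : (congrSubring q (m + 1)).toAddSubgroup →+ (Fin m → ZMod q) where
  toFun x i := (((x.1 i.succ - x.1 0) / q : ℤ) : ZMod q)
  map_zero' := by ext; simp
  map_add' x y := funext fun i => by
    simp only [AddSubgroup.coe_add, Pi.add_apply]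
    rw [add_sub_add_comm, Int.add_ediv_of_dvd_left (x.2 _ _), Int.cast_add]

lemma ker_divDiffHom : (divDiffHom q m).ker =
    (congrSubring (q ^ 2) (m + 1)).toAddSubgroup.addSubgroupOf
      (congrSubring q (m + 1)).toAddSubgroup := by
  ext ⟨x, hx⟩
  simp only [AddMonoidHom.mem_ker, AddSubgroup.mem_addSubgroupOf, Subring.mem_toAddSubgroup,
    mem_iff_forall_dvd_sub_zero, Fin.forall_fin_succ, sub_self, dvd_zero, true_and, divDiffHom,
    AddMonoidHom.coe_mk, ZeroHom.coe_mk, funext_iff, Pi.zero_apply,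
    ZMod.intCast_zmod_eq_zero_iff_dvd]
  refine forall_congr' fun i => ?_
  rw [Int.dvd_div_iff_mul_dvd (hx _ _), sq, Nat.cast_mul]

lemma divDiffHom_surjective [NeZero q] : Function.Surjective (divDiffHom q m) := fun v =>
  ⟨⟨(q : ℤ) • Fin.cons 0 fun i => ((v i).val : ℤ), natCast_smul_mem _⟩,
    funext fun i => by simp [divDiffHom, Int.mul_ediv_cancel_left _ (NeZero.ne (q : ℤ))]⟩

section Correspondence

variable (W : AddSubgroup (Fin m → ZMod q))

def preimageSubring : Subring (Fin (m + 1) → ℤ) :=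
  subringOfLE ((W.comap (divDiffHom q m)).map (congrSubring q (m + 1)).toAddSubgroup.subtype)
    (fun x hx => by
      have hxD : x ∈ congrSubring q (m + 1) := le_of_dvd (dvd_pow_self q two_ne_zero) hx
      have hker : ⟨x, hxD⟩ ∈ (divDiffHom q m).ker := ker_divDiffHom (q := q) ▸ hx
      exact ⟨⟨x, hxD⟩, AddSubgroup.mem_comap.2 (hker ▸ W.zero_mem), rfl⟩)
    (AddSubgroup.map_subtype_le _)

lemma toAddSubgroup_preimageSubring : (preimageSubring W).toAddSubgroup =
    (W.comap (divDiffHom q m)).map (congrSubring q (m + 1)).toAddSubgroup.subtype := rfl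

lemma preimageSubring_le : preimageSubring W ≤ congrSubring q (m + 1) :=
  AddSubgroup.map_subtype_le _

lemma index_preimageSubring [NeZero q] :
    (preimageSubring W).toAddSubgroup.index = W.index * q ^ m := by
  rw [toAddSubgroup_preimageSubring, AddSubgroup.index_map_subtype,
    AddSubgroup.index_comap_of_surjective _ divDiffHom_surjective, index_congrSubring]

lemma preimageSubring_injective [NeZero q] :
    Function.Injective (preimageSubring : AddSubgroup (Fin m → ZMod q) → _) := fun _ _ h =>
  AddSubgroup.comap_injective divDiffHom_surjective <|
    AddSubgroup.map_injective (AddSubgroup.subtype_injective _) (congrArg Subring.toAddSubgroup h)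

lemma preimageSubring_map_eq {S : Subring (Fin (m + 1) → ℤ)} (hS : S ≤ congrSubring q (m + 1))
    (hrel : S.toAddSubgroup.relIndex (congrSubring q (m + 1)).toAddSubgroup = q) :
    preimageSubring ((S.toAddSubgroup.addSubgroupOf _).map (divDiffHom q m)) = S := by
  have hker : (divDiffHom q m).ker ≤ S.toAddSubgroup.addSubgroupOf _ := by
    rw [ker_divDiffHom]
    exact AddSubgroup.addSubgroupOf_mono _ (sq_le_of_relIndex_dvd hrel.dvd)
  apply Subring.toAddSubgroup_injective
  rw [toAddSubgroup_preimageSubring, AddSubgroup.comap_map_eq, sup_eq_left.2 hker,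
    AddSubgroup.addSubgroupOf_map_subtype, inf_of_le_left (Subring.toAddSubgroup_mono hS)]

end Correspondence

end congrSubring

theorem numIrrSubrings_eq_natCard (n p e : ℕ) :
    numIrrSubrings n p e = Nat.card {S : Subring (Fin n → ℤ) //
      S.toAddSubgroup.index = p ^ e ∧ S ≤ congrSubring p n} :=
  rfl

open congrSubring

theorem numIrrSubrings_eq_zero_of_lt {p m e : ℕ} (hp : 1 < p) (he : e < m) :
    numIrrSubrings (m + 1) p e = 0 := by
  have : NeZero p := ⟨by omega⟩
  rw [numIrrSubrings_eq_natCard, Nat.card_eq_zero]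
  refine Or.inl ⟨fun ⟨S, hidx, hS⟩ => ?_⟩
  have hdvd := AddSubgroup.index_dvd_of_le (Subring.toAddSubgroup_mono hS)
  rw [index_congrSubring, hidx, Nat.pow_dvd_pow_iff_le_right hp] at hdvd
  omega

theorem eq_congrSubring_of_index_eq {p m : ℕ} [NeZero p] {S : Subring (Fin (m + 1) → ℤ)}
    (hS : S ≤ congrSubring p (m + 1)) (hidx : S.toAddSubgroup.index = p ^ m) :
    S = congrSubring p (m + 1) := by
  have hrel := AddSubgroup.relIndex_mul_index (Subring.toAddSubgroup_mono hS)
  rw [hidx, index_congrSubring, Nat.mul_eq_right (pow_ne_zero _ (NeZero.ne p)),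
    AddSubgroup.relIndex_eq_one] at hrel
  exact le_antisymm hS hrel

theorem numIrrSubrings_self_eq_one (p m : ℕ) [NeZero p] : numIrrSubrings (m + 1) p m = 1 := by
  rw [numIrrSubrings_eq_natCard]
  refine Eq.trans ?_ (Nat.card_unique (α := {S // S = congrSubring p (m + 1)}))
  refine Nat.card_congr (Equiv.subtypeEquivRight fun S => ⟨fun h => ?_, ?_⟩)
  · exact eq_congrSubring_of_index_eq h.2 h.1
  · rintro rfl
    exact ⟨index_congrSubring, le_rfl⟩

theorem numIrrSubrings_succ_self_eq_natCard (q m : ℕ) [NeZero q] :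
    numIrrSubrings (m + 1) q (m + 1) =
      Nat.card {W : AddSubgroup (Fin m → ZMod q) // W.index = q} := by
  have hqm : 0 < q ^ m := pow_pos (Nat.pos_of_neZero q) m
  rw [numIrrSubrings_eq_natCard]
  symm
  refine Nat.card_eq_of_bijective
    (fun W => ⟨preimageSubring W.1, ?_, preimageSubring_le W.1⟩) ⟨?_, ?_⟩
  · rw [index_preimageSubring, W.2, pow_succ']
  · exact fun W W' h => Subtype.ext (preimageSubring_injective (congrArg Subtype.val h))
  · rintro ⟨S, hidx, hS⟩
    have hrel := AddSubgroup.relIndex_mul_index (Subring.toAddSubgroup_mono hS)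
    rw [hidx, index_congrSubring, pow_succ'] at hrel
    let W := (S.toAddSubgroup.addSubgroupOf _).map (divDiffHom q m)
    have hW : preimageSubring W = S :=
      preimageSubring_map_eq hS (Nat.eq_of_mul_eq_mul_right hqm hrel)
    have hWidx : W.index = q := Nat.eq_of_mul_eq_mul_right hqm <| by
      rw [← index_preimageSubring, hW, hidx, pow_succ']
    exact ⟨⟨W, hWidx⟩, Subtype.ext hW⟩

theorem numIrrSubrings_succ_self_of_prime {p : ℕ} (hp : p.Prime) (m : ℕ) :
    numIrrSubrings (m + 1) p (m + 1) = (p ^ m - 1) / (p - 1) := by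
  have : Fact p.Prime := ⟨hp⟩
  rw [numIrrSubrings_succ_self_eq_natCard, AddSubgroup.natCard_index_eq_prime, Nat.card_fun,
    Nat.card_zmod, Nat.card_fin]

theorem g_n_small_cases (p n : ℕ) (hp : p.Prime) (hn : 1 ≤ n) :
    (∀ e : ℕ, e < n - 1 → numIrrSubrings n p e = 0) ∧
    numIrrSubrings (n + 1) p n = 1 ∧
    numIrrSubrings n p n = (p ^ (n - 1) - 1) / (p - 1) := by
  have : NeZero p := ⟨hp.ne_zero⟩
  obtain ⟨m, rfl⟩ : ∃ m, n = m + 1 := ⟨n - 1, by omega⟩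
  exact ⟨fun e he => numIrrSubrings_eq_zero_of_lt hp.one_lt (by omega),
    numIrrSubrings_self_eq_one p (m + 1), by simpa using numIrrSubrings_succ_self_of_prime hp m⟩
end

section
/- For every prime p and all integers n ≥ 2 and e ≥ 1, the number of irreducible subrings of ℤ^n of index p^e equals the sum, over all compositions α = (α_1,…,α_{n−1}) of e into n−1 positive parts, of g_α(p); that is, g_n(p^e) = Σ_{α ∈ C_{n,e}} g_α(p), where C_{n,e} is the set of compositions of e into n−1 positive parts. -/
open scoped BigOperators


section Core
variable {n : ℕ}

/-- A triangular generating family for a subgroup of `ℤ^n`. -/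
structure TriFam (L : AddSubgroup (Fin n → ℤ)) (w : Fin n → Fin n → ℤ) : Prop where
  mem : ∀ i, w i ∈ L
  pos : ∀ i, 0 < w i i
  zero : ∀ i j : Fin n, i < j → w i j = 0
  dvd : ∀ x ∈ L, ∀ i : Fin n, (∀ j, i < j → x j = 0) → w i i ∣ x i

lemma sub_sum_apply (x t : Fin n → ℤ) (w : Fin n → Fin n → ℤ) (i : Fin n) :
    (x - ∑ j, t j • w j) i = x i - ∑ j, t j * w j i := by
  simp [Finset.sum_apply]

namespace TriFam

variable {L : AddSubgroup (Fin n → ℤ)} {w : Fin n → Fin n → ℤ}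

lemma reduce_aux (h : TriFam L w) (k : ℕ) :
    ∀ x : Fin n → ℤ, ∃ t : Fin n → ℤ,
      (∀ j : Fin n, k ≤ (j : ℕ) → t j = 0) ∧
      (∀ i : Fin n, (i : ℕ) < k →
        0 ≤ (x - ∑ j, t j • w j) i ∧ (x - ∑ j, t j • w j) i < w i i) := by
  induction k with
  | zero => exact fun x => ⟨0, fun _ _ => rfl, fun i hi => absurd hi (Nat.not_lt_zero _)⟩
  | succ k ih =>
    intro x
    by_cases hk : k < n
    · set K : Fin n := ⟨k, hk⟩ with hK
      set q : ℤ := x K / w K K with hq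
      obtain ⟨t, ht0, ht⟩ := ih (x - q • w K)
      have htK : t K = 0 := ht0 K le_rfl
      refine ⟨t + (Pi.single K q : Fin n → ℤ), ?_, ?_⟩
      · intro j hj
        have h1 : t j = 0 := ht0 j (Nat.le_of_succ_le hj)
        have h2 : (Pi.single K q : Fin n → ℤ) j = 0 := by
          apply Pi.single_eq_of_ne
          intro hjK; subst hjK; simp [hK] at hj
        simp [h1, h2]
      · have hsum : ∑ j, (t + (Pi.single K q : Fin n → ℤ)) j • w j
            = (∑ j, t j • w j) + q • w K := by
          have : ∑ j, (Pi.single K q : Fin n → ℤ) j • w j = q • w K := by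
            rw [Finset.sum_eq_single K]
            · simp
            · intro b _ hb; rw [Pi.single_eq_of_ne hb]; simp
            · simp
          simp only [Pi.add_apply, add_smul, Finset.sum_add_distrib, this]
        have hrw : x - ∑ j, (t + (Pi.single K q : Fin n → ℤ)) j • w j
            = (x - q • w K) - ∑ j, t j • w j := by
          rw [hsum]; ring
        rw [hrw]
        intro i hi
        rcases Nat.lt_or_ge (i : ℕ) k with hik | hik
        · exact ht i hik
        · have hiK : i = K := by apply Fin.ext; simp [hK]; omega
          subst hiK
          have hval : ((x - q • w K) - ∑ j, t j • w j) K = x K - q * w K K := by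
            rw [sub_sum_apply]
            have hz : ∑ j, t j * w j K = 0 := by
              apply Finset.sum_eq_zero
              intro j _
              rcases Nat.lt_or_ge (j : ℕ) k with hj | hj
              · have hjK : j < K := by rw [Fin.lt_def]; simpa [hK] using hj
                rw [h.zero j K hjK, mul_zero]
              · rw [ht0 j hj, zero_mul]
            rw [hz]
            simp [Pi.smul_apply, smul_eq_mul]
          rw [hval]
          have hd : 0 < w K K := h.pos K
          have hmod : x K - q * w K K = x K % w K K := by
            rw [hq, Int.emod_def]; ring_nf
          rw [hmod]
          exact ⟨Int.emod_nonneg _ (ne_of_gt hd), Int.emod_lt_of_pos _ hd⟩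
    · obtain ⟨t, ht0, ht⟩ := ih x
      refine ⟨t, fun j hj => ht0 j ?_, fun i hi => ht i ?_⟩
      · omega
      · have := i.isLt; omega

lemma eq_zero (h : TriFam L w) {z : Fin n → ℤ} (hz : z ∈ L)
    (hb : ∀ i, |z i| < w i i) : z = 0 := by
  by_contra hne
  have hex : ∃ i, z i ≠ 0 := by
    by_contra hall
    push_neg at hall
    exact hne (funext hall)
  set T : Finset (Fin n) := Finset.univ.filter (fun i => z i ≠ 0) with hT
  have hTne : T.Nonempty := by
    obtain ⟨i, hi⟩ := hex
    exact ⟨i, by simp [hT, hi]⟩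
  set i := T.max' hTne with hi
  have hzi : z i ≠ 0 := by
    have := T.max'_mem hTne
    simpa [hT] using this
  have hdvd : w i i ∣ z i := by
    apply h.dvd z hz i
    intro j hj
    by_contra hzj
    have hjT : j ∈ T := by simp [hT, hzj]
    have := T.le_max' j hjT
    rw [← hi] at this
    exact absurd hj (not_lt.mpr this)
  exact hzi (Int.eq_zero_of_abs_lt_dvd hdvd (hb i))

lemma mem_iff (h : TriFam L w) (x : Fin n → ℤ) :
    x ∈ L ↔ ∃ t : Fin n → ℤ, x = ∑ j, t j • w j := by
  constructor
  · intro hx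
    obtain ⟨t, _, ht⟩ := h.reduce_aux n x
    refine ⟨t, ?_⟩
    have hmem : x - ∑ j, t j • w j ∈ L := by
      apply AddSubgroup.sub_mem _ hx
      exact AddSubgroup.sum_mem _ (fun j _ => AddSubgroup.zsmul_mem _ (h.mem j) _)
    have hzero : x - ∑ j, t j • w j = 0 := by
      apply h.eq_zero hmem
      intro i
      obtain ⟨h1, h2⟩ := ht i i.isLt
      rwa [abs_of_nonneg h1]
    exact sub_eq_zero.mp hzero
  · rintro ⟨t, rfl⟩
    exact AddSubgroup.sum_mem _ (fun j _ => AddSubgroup.zsmul_mem _ (h.mem j) _)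

end TriFam
end Core
section Core2
variable {n : ℕ} {L : AddSubgroup (Fin n → ℤ)} {w : Fin n → Fin n → ℤ}

namespace TriFam

lemma exists_reduced (h : TriFam L w) :
    ∃ c : Fin n → Fin n → ℤ, TriFam L c ∧
      (∀ i j : Fin n, j < i → 0 ≤ c i j ∧ c i j < c j j) := by
  choose t ht0 ht using fun i : Fin n => h.reduce_aux (i : ℕ) (w i)
  set c : Fin n → Fin n → ℤ := fun i => w i - ∑ j, t i j • w j with hc
  have hcw : ∀ i j : Fin n, i ≤ j → c i j = w i j := by
    intro i j hij
    show (w i - ∑ l, t i l • w l) j = w i j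
    rw [sub_sum_apply]
    have hz : ∑ l, t i l * w l j = 0 := by
      apply Finset.sum_eq_zero
      intro l _
      rcases Nat.lt_or_ge (l : ℕ) (i : ℕ) with hl | hl
      · have : l < j := lt_of_lt_of_le (by rwa [Fin.lt_def]) hij
        rw [h.zero l j this, mul_zero]
      · rw [ht0 i l hl, zero_mul]
    rw [hz, sub_zero]
  have htri : TriFam L c := by
    constructor
    · intro i
      exact AddSubgroup.sub_mem _ (h.mem i)
        (AddSubgroup.sum_mem _ fun j _ => AddSubgroup.zsmul_mem _ (h.mem j) _)
    · intro i; rw [hcw i i le_rfl]; exact h.pos i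
    · intro i j hij; rw [hcw i j (le_of_lt hij)]; exact h.zero i j hij
    · intro x hx i hxi
      rw [hcw i i le_rfl]
      exact h.dvd x hx i hxi
  refine ⟨c, htri, ?_⟩
  intro i j hji
  rw [hcw j j le_rfl]
  exact ht i j (by rwa [← Fin.lt_def])

lemma diag_eq {w' : Fin n → Fin n → ℤ} (h : TriFam L w) (h' : TriFam L w') (i : Fin n) :
    w i i = w' i i := by
  apply Int.dvd_antisymm (le_of_lt (h.pos i)) (le_of_lt (h'.pos i))
  · exact h.dvd _ (h'.mem i) i (fun j hj => h'.zero i j hj)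
  · exact h'.dvd _ (h.mem i) i (fun j hj => h.zero i j hj)

lemma reduced_unique {w' : Fin n → Fin n → ℤ} (h : TriFam L w) (h' : TriFam L w')
    (hr : ∀ i j : Fin n, j < i → 0 ≤ w i j ∧ w i j < w j j)
    (hr' : ∀ i j : Fin n, j < i → 0 ≤ w' i j ∧ w' i j < w' j j) : w = w' := by
  funext i
  have hd : ∀ l : Fin n, w l l = w' l l := h.diag_eq h'
  have := h.eq_zero (AddSubgroup.sub_mem _ (h.mem i) (h'.mem i)) (z := w i - w' i) ?_
  · have : w i - w' i = 0 := this
    funext j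
    have := congrFun this j
    simp only [Pi.sub_apply, Pi.zero_apply, sub_eq_zero] at this
    exact this
  · intro j
    simp only [Pi.sub_apply]
    rcases lt_trichotomy j i with hji | rfl | hij
    · obtain ⟨a1, a2⟩ := hr i j hji
      obtain ⟨b1, b2⟩ := hr' i j hji
      rw [abs_lt]
      have hb2 : w' i j < w j j := by rw [hd j]; exact b2
      constructor <;> omega
    · have hz : w j j - w' j j = 0 := by rw [hd j]; ring
      rw [hz, abs_zero]; exact h.pos j
    · have hz : w i j - w' i j = 0 := by rw [h.zero i j hij, h'.zero i j hij]; ring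
      rw [hz, abs_zero]; exact h.pos j

lemma index_eq (h : TriFam L w) : L.index = ∏ i, (w i i).toNat := by
  have key : Function.Bijective (fun t : (∀ i : Fin n, Fin (w i i).toNat) =>
      (QuotientAddGroup.mk (fun i => ((t i : ℕ) : ℤ)) : (Fin n → ℤ) ⧸ L)) := by
    constructor
    · intro a b hab
      rw [QuotientAddGroup.eq] at hab
      have hmem : (fun i => ((b i : ℕ) : ℤ)) - (fun i => ((a i : ℕ) : ℤ)) ∈ L := by
        have : (-fun i => ((a i : ℕ) : ℤ)) + (fun i => ((b i : ℕ) : ℤ)) ∈ L := hab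
        convert this using 1
        funext i; simp; ring
      have hz := h.eq_zero hmem ?_
      · funext i
        have := congrFun hz i
        simp only [Pi.sub_apply, Pi.zero_apply, sub_eq_zero] at this
        exact Fin.ext (by exact_mod_cast this.symm)
      · intro i
        have h1 : ((a i : ℕ) : ℤ) < w i i := by
          have := (a i).isLt
          have h2 : ((a i : ℕ) : ℤ) < ((w i i).toNat : ℤ) := by exact_mod_cast this
          rwa [Int.toNat_of_nonneg (le_of_lt (h.pos i))] at h2
        have h1' : ((b i : ℕ) : ℤ) < w i i := by
          have := (b i).isLt
          have h2 : ((b i : ℕ) : ℤ) < ((w i i).toNat : ℤ) := by exact_mod_cast this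
          rwa [Int.toNat_of_nonneg (le_of_lt (h.pos i))] at h2
        simp only [Pi.sub_apply]
        rw [abs_lt]
        constructor
        · have : (0:ℤ) ≤ ((a i : ℕ) : ℤ) := Int.natCast_nonneg _
          omega
        · have : (0:ℤ) ≤ ((b i : ℕ) : ℤ) := Int.natCast_nonneg _
          omega
    · intro q
      induction q using QuotientAddGroup.induction_on with
      | H x =>
        obtain ⟨t, _, ht⟩ := h.reduce_aux n x
        set y := x - ∑ j, t j • w j with hy
        have hbd : ∀ i, 0 ≤ y i ∧ y i < w i i := fun i => ht i i.isLt
        refine ⟨fun i => ⟨(y i).toNat, ?_⟩, ?_⟩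
        · have := (hbd i).2
          have h0 := (hbd i).1
          omega
        · have hyx : (QuotientAddGroup.mk y : (Fin n → ℤ) ⧸ L) = QuotientAddGroup.mk x := by
            rw [QuotientAddGroup.eq]
            have : -y + x = ∑ j, t j • w j := by rw [hy]; ring
            rw [this]
            exact AddSubgroup.sum_mem _ fun j _ => AddSubgroup.zsmul_mem _ (h.mem j) _
          have hcoe : (fun i => (((y i).toNat : ℕ) : ℤ)) = y :=
            funext fun i => Int.toNat_of_nonneg (hbd i).1
          show (QuotientAddGroup.mk (fun i => (((y i).toNat : ℕ) : ℤ)) : (Fin n → ℤ) ⧸ L)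
              = QuotientAddGroup.mk x
          rw [hcoe]
          exact hyx
  rw [AddSubgroup.index, ← Nat.card_eq_of_bijective _ key, Nat.card_pi]
  simp

end TriFam

lemma exists_triFam (L : AddSubgroup (Fin n → ℤ)) (hL : L.index ≠ 0) :
    ∃ w, TriFam L w := by
  have key : ∀ i : Fin n, ∃ v, v ∈ L ∧ (∀ j, i < j → v j = 0) ∧ 0 < v i ∧
      ∀ x ∈ L, (∀ j, i < j → x j = 0) → v i ∣ x i := by
    intro i
    set Li : AddSubgroup (Fin n → ℤ) :=
      { carrier := {x | x ∈ L ∧ ∀ j, i < j → x j = 0}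
        zero_mem' := ⟨L.zero_mem, fun j _ => rfl⟩
        add_mem' := fun ha hb => ⟨L.add_mem ha.1 hb.1,
          fun j hj => by simp [ha.2 j hj, hb.2 j hj]⟩
        neg_mem' := fun ha => ⟨L.neg_mem ha.1, fun j hj => by simp [ha.2 j hj]⟩ } with hLi
    set Ji : AddSubgroup ℤ := Li.map (Pi.evalAddMonoidHom (fun _ : Fin n => ℤ) i) with hJi
    obtain ⟨a, ha⟩ := Int.subgroup_cyclic Ji
    have hmemJi : ∀ z : ℤ, z ∈ Ji ↔ a ∣ z := by
      intro z
      rw [ha, AddSubgroup.mem_closure_singleton]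
      constructor
      · rintro ⟨k, rfl⟩; rw [zsmul_eq_mul]; exact dvd_mul_left a k
      · rintro ⟨k, rfl⟩; exact ⟨k, by push_cast [zsmul_eq_mul]; ring⟩
    have hsingle : (L.index : ℤ) • (Pi.single i 1 : Fin n → ℤ) ∈ Li := by
      constructor
      · have := AddSubgroup.nsmul_index_mem L (Pi.single i 1 : Fin n → ℤ)
        simpa [natCast_zsmul] using this
      · intro j hj
        have : (Pi.single i 1 : Fin n → ℤ) j = 0 := Pi.single_eq_of_ne (by intro hh; subst hh; exact lt_irrefl _ hj) 1
        simp [this]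
    have hIdx : ((L.index : ℤ)) ∈ Ji := by
      refine ⟨_, hsingle, ?_⟩
      simp [Pi.evalAddMonoidHom]
    have ha0 : a ≠ 0 := by
      intro h0
      rw [h0] at hmemJi
      have := (hmemJi _).mp hIdx
      simp at this
      exact hL (by exact_mod_cast this)
    have haJ : a ∈ Ji := (hmemJi a).mpr dvd_rfl
    obtain ⟨v0, hv0Li, hv0⟩ := haJ
    have hv0i : v0 i = a := hv0
    rcases lt_or_gt_of_ne ha0 with hneg | hpos
    · refine ⟨-v0, L.neg_mem hv0Li.1, fun j hj => by simp [hv0Li.2 j hj], ?_, ?_⟩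
      · show 0 < (-v0) i
        rw [Pi.neg_apply, hv0i]; omega
      · intro x hx hxj
        have hdvd : a ∣ x i := (hmemJi _).mp ⟨x, ⟨hx, hxj⟩, rfl⟩
        show (-v0) i ∣ x i
        rw [Pi.neg_apply, hv0i, neg_dvd]
        exact hdvd
    · refine ⟨v0, hv0Li.1, hv0Li.2, by omega, ?_⟩
      intro x hx hxj
      have : x i ∈ Ji := ⟨x, ⟨hx, hxj⟩, rfl⟩
      rw [hv0i]
      exact (hmemJi _).mp this
  choose v hv1 hv2 hv3 hv4 using key
  exact ⟨v, hv1, hv3, fun i j hij => hv2 i j hij, fun x hx i hxi => hv4 i x hx hxi⟩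

end Core2



section Mat
variable {n : ℕ}

/-- The family of columns of a matrix. -/
def colFam (A : Matrix (Fin n) (Fin n) ℤ) : Fin n → Fin n → ℤ := fun j i => A i j

/-- The matrix whose columns are the given family. -/
def matOf (w : Fin n → Fin n → ℤ) : Matrix (Fin n) (Fin n) ℤ := fun i j => w j i

@[simp] lemma colFam_matOf (w : Fin n → Fin n → ℤ) : colFam (matOf w) = w := rfl

/-- The additive subgroup spanned by the columns of a matrix. -/
def matSpan (A : Matrix (Fin n) (Fin n) ℤ) : AddSubgroup (Fin n → ℤ) :=
  (LinearMap.range A.mulVecLin).toAddSubgroup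

lemma mem_matSpan_iff {A : Matrix (Fin n) (Fin n) ℤ} {x : Fin n → ℤ} :
    x ∈ matSpan A ↔ ∃ v, A.mulVec v = x := by
  simp [matSpan, LinearMap.mem_range, Matrix.mulVecLin_apply]

lemma range_mulVec_eq (A : Matrix (Fin n) (Fin n) ℤ) :
    Set.range A.mulVec = (matSpan A : Set (Fin n → ℤ)) := by
  ext x
  simp [Set.mem_range, mem_matSpan_iff]

lemma mulVec_apply' (A : Matrix (Fin n) (Fin n) ℤ) (v : Fin n → ℤ) (i : Fin n) :
    A.mulVec v i = ∑ j, A i j * v j := by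
  simp [Matrix.mulVec, dotProduct]

lemma mulVec_eq_sum (A : Matrix (Fin n) (Fin n) ℤ) (v : Fin n → ℤ) :
    A.mulVec v = ∑ j, v j • colFam A j := by
  funext i
  rw [mulVec_apply', Finset.sum_apply]
  exact Finset.sum_congr rfl fun j _ => by simp [colFam, mul_comm]

lemma colFam_mem_matSpan (A : Matrix (Fin n) (Fin n) ℤ) (j : Fin n) :
    colFam A j ∈ matSpan A := by
  rw [mem_matSpan_iff]
  refine ⟨Pi.single j 1, ?_⟩
  funext i
  rw [mulVec_apply']
  rw [Finset.sum_eq_single j]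
  · simp [colFam]
  · intro b _ hb; rw [Pi.single_eq_of_ne hb]; simp
  · simp

lemma triFam_matSpan (A : Matrix (Fin n) (Fin n) ℤ)
    (hlow : ∀ i j : Fin n, j < i → A i j = 0) (hpos : ∀ i, 0 < A i i) :
    TriFam (matSpan A) (colFam A) := by
  constructor
  · exact colFam_mem_matSpan A
  · exact fun i => hpos i
  · intro i j hij
    exact hlow j i hij
  · intro x hx i hxi
    rw [mem_matSpan_iff] at hx
    obtain ⟨v, hv⟩ := hx
    have hv0 : ∀ j : Fin n, i < j → v j = 0 := by
      by_contra hcon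
      push_neg at hcon
      obtain ⟨j0, hj0, hvj0⟩ := hcon
      set T := Finset.univ.filter (fun j => i < j ∧ v j ≠ 0) with hT
      have hTne : T.Nonempty := ⟨j0, by simp [hT, hj0, hvj0]⟩
      set J := T.max' hTne with hJ
      have hJmem : i < J ∧ v J ≠ 0 := by
        have := T.max'_mem hTne
        simpa [hT] using this
      have hxJ : x J = 0 := hxi J hJmem.1
      have hsum : x J = A J J * v J := by
        rw [← hv, mulVec_apply']
        rw [Finset.sum_eq_single J]
        · intro b _ hb
          rcases lt_or_gt_of_ne hb with hbJ | hbJ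
          · rw [hlow J b hbJ, zero_mul]
          · have hvb : v b = 0 := by
              by_contra hvb
              have hbT : b ∈ T := by
                simp only [hT, Finset.mem_filter, Finset.mem_univ, true_and]
                exact ⟨lt_trans hJmem.1 hbJ, hvb⟩
              exact absurd (T.le_max' b hbT) (not_le.mpr hbJ)
            rw [hvb, mul_zero]
        · simp
      rw [hxJ] at hsum
      have := hpos J
      have : v J = 0 := by
        rcases mul_eq_zero.mp hsum.symm with h1 | h1
        · omega
        · exact h1
      exact hJmem.2 this
    refine ⟨v i, ?_⟩
    rw [← hv, mulVec_apply']
    have hss : ∑ j, A i j * v j = A i i * v i := by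
      apply Finset.sum_eq_single
      · intro b _ hb
        rcases lt_or_gt_of_ne hb with hbi | hbi
        · rw [hlow i b hbi, zero_mul]
        · rw [hv0 b hbi, mul_zero]
      · intro hni; exact absurd (Finset.mem_univ i) hni
    rw [hss]; rfl

lemma TriFam.matSpan_matOf {L : AddSubgroup (Fin n → ℤ)} {w : Fin n → Fin n → ℤ}
    (h : TriFam L w) : matSpan (matOf w) = L := by
  ext x
  rw [mem_matSpan_iff, h.mem_iff]
  constructor
  · rintro ⟨v, rfl⟩
    exact ⟨v, by rw [mulVec_eq_sum, colFam_matOf]⟩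
  · rintro ⟨t, rfl⟩
    exact ⟨t, by rw [mulVec_eq_sum, colFam_matOf]⟩

/-- The subring attached to a subring matrix. -/
def matSubring (A : Matrix (Fin n) (Fin n) ℤ) (h : IsSubringMatrix A) :
    Subring (Fin n → ℤ) where
  carrier := matSpan A
  zero_mem' := (matSpan A).zero_mem
  add_mem' := fun ha hb => (matSpan A).add_mem ha hb
  neg_mem' := fun ha => (matSpan A).neg_mem ha
  one_mem' := by
    have := h.2.1
    rw [range_mulVec_eq] at this
    exact this
  mul_mem' := by
    intro x y hx hy
    rw [SetLike.mem_coe, mem_matSpan_iff] at hx hy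
    obtain ⟨u, hu⟩ := hx
    obtain ⟨v, hv⟩ := hy
    have hxy : x * y = ∑ j, ∑ k, (u j * v k) • (fun i => A i j * A i k) := by
      funext i
      rw [← hu, ← hv]
      simp only [Pi.mul_apply, Finset.sum_apply, Pi.smul_apply, smul_eq_mul]
      rw [mulVec_apply', mulVec_apply', Finset.sum_mul_sum]
      exact Finset.sum_congr rfl fun j _ => Finset.sum_congr rfl fun k _ => by ring
    show x * y ∈ matSpan A
    rw [hxy]
    apply AddSubgroup.sum_mem
    intro j _
    apply AddSubgroup.sum_mem
    intro k _
    apply AddSubgroup.zsmul_mem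
    have := h.2.2 j k
    rw [range_mulVec_eq] at this
    exact this

lemma toAddSubgroup_matSubring (A : Matrix (Fin n) (Fin n) ℤ) (h : IsSubringMatrix A) :
    (matSubring A h).toAddSubgroup = matSpan A := by
  ext x
  rfl

end Mat
section Main
variable {m : ℕ}

lemma diag_pos_of_cond (p : ℕ) (hp : p.Prime) (α : Fin m → ℕ)
    (A : Matrix (Fin (m+1)) (Fin (m+1)) ℤ)
    (hdiag : ∀ i : Fin m, A i.castSucc i.castSucc = (p : ℤ) ^ α i)
    (hlast : ∀ i : Fin (m+1), A i (Fin.last m) = 1) :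
    ∀ i, 0 < A i i := by
  intro i
  induction i using Fin.lastCases with
  | last => rw [hlast (Fin.last m)]; norm_num
  | cast j =>
    rw [hdiag j]
    have hp0 : (0:ℤ) < (p:ℤ) := by exact_mod_cast hp.pos
    positivity

lemma backward (p e : ℕ) (hp : p.Prime) (α : Fin m → ℕ) (hsum : ∑ i, α i = e)
    (A : Matrix (Fin (m+1)) (Fin (m+1)) ℤ) (hA : IsSubringMatrix A)
    (hdiag : ∀ i : Fin m, A i.castSucc i.castSucc = (p : ℤ) ^ α i)
    (hdvd : ∀ i : Fin (m+1), ∀ j : Fin m, (p : ℤ) ∣ A i j.castSucc)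
    (hlast : ∀ i : Fin (m+1), A i (Fin.last m) = 1) :
    (matSubring A hA).toAddSubgroup.index = p ^ e ∧
    ∀ x ∈ matSubring A hA, ∀ i j : Fin (m+1), (p : ℤ) ∣ x i - x j := by
  have hpos : ∀ i, 0 < A i i := diag_pos_of_cond p hp α A hdiag hlast
  have tri := triFam_matSpan A hA.1.1 hpos
  constructor
  · rw [toAddSubgroup_matSubring, tri.index_eq]
    calc ∏ i, (colFam A i i).toNat
        = (∏ j : Fin m, (colFam A j.castSucc j.castSucc).toNat) *
            (colFam A (Fin.last m) (Fin.last m)).toNat := Fin.prod_univ_castSucc _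
      _ = (∏ j : Fin m, p ^ α j) * 1 := by
          congr 1
          · apply Finset.prod_congr rfl
            intro j _
            have : colFam A j.castSucc j.castSucc = (p : ℤ) ^ α j := hdiag j
            rw [this, ← Nat.cast_pow, Int.toNat_natCast]
          · have : colFam A (Fin.last m) (Fin.last m) = 1 := hlast (Fin.last m)
            rw [this]; rfl
      _ = p ^ e := by
          rw [mul_one, Finset.prod_pow_eq_pow_sum, hsum]
  · intro x hx i j
    have hx' : x ∈ matSpan A := hx
    rw [mem_matSpan_iff] at hx'
    obtain ⟨v, rfl⟩ := hx'
    rw [mulVec_apply', mulVec_apply', ← Finset.sum_sub_distrib]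
    apply Finset.dvd_sum
    intro k _
    have : A i k * v k - A j k * v k = (A i k - A j k) * v k := by ring
    rw [this]
    apply Dvd.dvd.mul_right
    induction k using Fin.lastCases with
    | last => rw [hlast i, hlast j]; simp
    | cast l => exact dvd_sub (hdvd i l) (hdvd j l)

lemma forward (p e : ℕ) (hp : p.Prime) (S : Subring (Fin (m+1) → ℤ))
    (hidx : S.toAddSubgroup.index = p ^ e)
    (hirr : ∀ x ∈ S, ∀ i j : Fin (m+1), (p : ℤ) ∣ x i - x j) :
    ∃ (α : Fin m → ℕ) (A : Matrix (Fin (m+1)) (Fin (m+1)) ℤ),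
      (∀ i, 0 < α i) ∧ (∑ i, α i = e) ∧
      IsSubringMatrix A ∧
      (∀ i : Fin m, A i.castSucc i.castSucc = (p : ℤ) ^ α i) ∧
      (∀ i : Fin (m+1), ∀ j : Fin m, (p : ℤ) ∣ A i j.castSucc) ∧
      (∀ i : Fin (m+1), A i (Fin.last m) = 1) ∧
      matSpan A = S.toAddSubgroup := by
  set L := S.toAddSubgroup with hLdef
  have hmemL : ∀ x, x ∈ L ↔ x ∈ S := fun x => Iff.rfl
  have hL : L.index ≠ 0 := by rw [hidx]; exact pow_ne_zero _ hp.pos.ne'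
  obtain ⟨w0, hw0⟩ := exists_triFam L hL
  obtain ⟨c, hc, hcr⟩ := hw0.exists_reduced
  set A : Matrix (Fin (m+1)) (Fin (m+1)) ℤ := matOf c with hA
  have hspan : matSpan A = L := hc.matSpan_matOf
  have hAc : ∀ i j, A i j = c j i := fun i j => rfl
  have hHNF : IsHermiteNormalForm A := by
    constructor
    · intro i j hji
      exact hc.zero j i hji
    · intro i j hij
      obtain ⟨h1, h2⟩ := hcr j i hij
      exact ⟨h1, h2⟩
  -- last diagonal is 1
  have h1L : (1 : Fin (m+1) → ℤ) ∈ L := (hmemL 1).mpr S.one_mem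
  have hdlast : c (Fin.last m) (Fin.last m) = 1 := by
    have hdvd1 : c (Fin.last m) (Fin.last m) ∣ 1 := by
      have := hc.dvd 1 h1L (Fin.last m) (fun j hj => absurd hj (not_lt.mpr (Fin.le_last j)))
      simpa using this
    have hpos := hc.pos (Fin.last m)
    exact Int.eq_one_of_dvd_one (le_of_lt hpos) hdvd1
  -- p divides all entries of the first m columns
  have hpdvd : ∀ (j : Fin m) (i : Fin (m+1)), (p : ℤ) ∣ c j.castSucc i := by
    intro j i
    have hmem : c j.castSucc ∈ S := (hmemL _).mp (hc.mem _)
    have hlastz : c j.castSucc (Fin.last m) = 0 := hc.zero _ _ (Fin.castSucc_lt_last j)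
    have := hirr _ hmem i (Fin.last m)
    rwa [hlastz, sub_zero] at this
  -- diagonal entries for the first m columns are ≥ 2
  have hdiag2 : ∀ j : Fin m, 2 ≤ c j.castSucc j.castSucc := by
    intro j
    have hdvd := hpdvd j j.castSucc
    have hpos := hc.pos j.castSucc
    have hple := Int.le_of_dvd hpos hdvd
    have : (2 : ℤ) ≤ (p : ℤ) := by exact_mod_cast hp.two_le
    omega
  -- last column is all ones
  have hlast1 : c (Fin.last m) = 1 := by
    have hz := hc.eq_zero (z := c (Fin.last m) - 1)
      (AddSubgroup.sub_mem _ (hc.mem _) h1L) ?_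
    · funext i
      have := congrFun hz i
      simp only [Pi.sub_apply, Pi.zero_apply, Pi.one_apply, sub_eq_zero] at this
      exact this
    · intro i
      simp only [Pi.sub_apply, Pi.one_apply]
      induction i using Fin.lastCases with
      | last =>
        rw [hdlast]
        simp [hdlast]
      | cast j =>
        obtain ⟨h1, h2⟩ := hcr (Fin.last m) j.castSucc (Fin.castSucc_lt_last j)
        have := hdiag2 j
        rw [abs_lt]
        omega
  -- diagonal entries are powers of p
  have hidx' : ∏ i, (c i i).toNat = p ^ e := by
    rw [← hc.index_eq, hidx]
  have hdvdpow : ∀ i : Fin (m+1), (c i i).toNat ∣ p ^ e := by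
    intro i
    rw [← hidx']
    exact Finset.dvd_prod_of_mem _ (Finset.mem_univ i)
  have hexp : ∀ j : Fin m, ∃ k, 1 ≤ k ∧ k ≤ e ∧ (c j.castSucc j.castSucc).toNat = p ^ k := by
    intro j
    obtain ⟨k, hk, hkeq⟩ := (Nat.dvd_prime_pow hp).mp (hdvdpow j.castSucc)
    refine ⟨k, ?_, hk, hkeq⟩
    by_contra hk0
    have : k = 0 := by omega
    subst this
    have h2 := hdiag2 j
    simp at hkeq
    omega
  choose α hα1 hαe hαeq using hexp
  have hcastdiag : ∀ j : Fin m, c j.castSucc j.castSucc = (p : ℤ) ^ α j := by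
    intro j
    have hpos := hc.pos j.castSucc
    have := hαeq j
    have h2 : ((c j.castSucc j.castSucc).toNat : ℤ) = c j.castSucc j.castSucc :=
      Int.toNat_of_nonneg (le_of_lt hpos)
    rw [this] at h2
    rw [← h2]
    push_cast
    ring
  have hsum : ∑ j, α j = e := by
    have hsplit : ∏ i, (c i i).toNat
        = (∏ j : Fin m, (c j.castSucc j.castSucc).toNat) * (c (Fin.last m) (Fin.last m)).toNat :=
      Fin.prod_univ_castSucc _
    rw [hsplit, hdlast] at hidx'
    simp only [Int.toNat_one, mul_one] at hidx'
    have : ∏ j : Fin m, p ^ α j = p ^ e := by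
      rw [← hidx']
      exact Finset.prod_congr rfl fun j _ => (hαeq j).symm
    rw [Finset.prod_pow_eq_pow_sum] at this
    exact Nat.pow_right_injective hp.two_le this
  refine ⟨α, A, hα1, hsum, ⟨hHNF, ?_, ?_⟩, ?_, ?_, ?_, hspan⟩
  · rw [range_mulVec_eq, hspan]
    exact h1L
  · intro j k
    rw [range_mulVec_eq, hspan]
    have : (fun i => A i j * A i k) = c j * c k := by
      funext i; rfl
    rw [this]
    exact (hmemL _).mpr (S.mul_mem ((hmemL _).mp (hc.mem j)) ((hmemL _).mp (hc.mem k)))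
  · intro j
    exact hcastdiag j
  · intro i j
    exact hpdvd j i
  · intro i
    rw [hAc, hlast1]
    rfl

end Main
section Uniq
variable {n : ℕ}

lemma matrix_unique (A B : Matrix (Fin n) (Fin n) ℤ)
    (hA : IsHermiteNormalForm A) (hB : IsHermiteNormalForm B)
    (hposA : ∀ i, 0 < A i i) (hposB : ∀ i, 0 < B i i)
    (hspan : matSpan A = matSpan B) : A = B := by
  have triA := triFam_matSpan A hA.1 hposA
  have triB := triFam_matSpan B hB.1 hposB
  rw [hspan] at triA
  have hcol : colFam A = colFam B := by
    apply triA.reduced_unique triB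
    · intro i j hji
      exact (hA.2 j i hji)
    · intro i j hji
      exact (hB.2 j i hji)
  funext i j
  exact congrFun (congrFun hcol j) i

end Uniq

theorem g_n_eq_sum_over_compositions (p n e : ℕ) (hp : p.Prime) (hn : 2 ≤ n)
    (he : 1 ≤ e) :
    numIrrSubrings n p e =
      ∑ᶠ α ∈ {α : Fin (n - 1) → ℕ | (∀ i, 0 < α i) ∧ ∑ i, α i = e}, gComp p α := by
  obtain ⟨m, rfl⟩ : ∃ m, n = m + 1 := ⟨n - 1, by omega⟩
  show numIrrSubrings (m + 1) p e =
      ∑ᶠ α ∈ {α : Fin m → ℕ | (∀ i, 0 < α i) ∧ ∑ i, α i = e}, gComp p α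
  classical
  set C : Set (Fin m → ℕ) := {α | (∀ i, 0 < α i) ∧ ∑ i, α i = e} with hC
  have hCfin : C.Finite := by
    apply Set.Finite.subset (Set.Finite.pi (fun _ : Fin m => Set.finite_Iic e))
    intro α hα
    rw [Set.mem_univ_pi]
    intro i
    exact le_trans (Finset.single_le_sum (f := α) (fun j _ => Nat.zero_le _)
      (Finset.mem_univ i)) (le_of_eq hα.2)
  set Cf : Finset (Fin m → ℕ) := hCfin.toFinset with hCf
  have hmemCf : ∀ a : Fin m → ℕ, a ∈ Cf ↔ ((∀ i, 0 < a i) ∧ ∑ i, a i = e) := by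
    intro a
    rw [hCf, Set.Finite.mem_toFinset]
    exact Iff.rfl
  -- finiteness of the fibers
  have hFibFin : ∀ a : ↥Cf,
      Finite {A : Matrix (Fin (m + 1)) (Fin (m + 1)) ℤ //
        IsSubringMatrix A ∧
        (∀ i : Fin m, A i.castSucc i.castSucc = (p : ℤ) ^ (a : Fin m → ℕ) i) ∧
        (∀ i : Fin (m + 1), ∀ j : Fin m, (p : ℤ) ∣ A i j.castSucc) ∧
        ∀ i : Fin (m + 1), A i (Fin.last m) = 1} := by
    rintro ⟨a, ha⟩
    obtain ⟨hapos, hasum⟩ := (hmemCf a).mp ha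
    set B : ℤ := (p : ℤ) ^ e with hB
    have hp1 : (1 : ℤ) ≤ (p : ℤ) := by exact_mod_cast hp.one_le
    have hB1 : (1 : ℤ) ≤ B := one_le_pow₀ hp1
    have hbound : ∀ A : Matrix (Fin (m + 1)) (Fin (m + 1)) ℤ,
        IsSubringMatrix A →
        (∀ i : Fin m, A i.castSucc i.castSucc = (p : ℤ) ^ a i) →
        (∀ i : Fin (m + 1), A i (Fin.last m) = 1) →
        ∀ i j, 0 ≤ A i j ∧ A i j ≤ B := by
      intro A hSM hdiag hlast i j
      have hdiagB : ∀ i, 0 < A i i ∧ A i i ≤ B := by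
        intro i
        induction i using Fin.lastCases with
        | last =>
          rw [hlast (Fin.last m)]
          exact ⟨one_pos, hB1⟩
        | cast l =>
          rw [hdiag l]
          have hale : a l ≤ e := by
            rw [← hasum]
            exact Finset.single_le_sum (f := a) (fun j _ => Nat.zero_le _) (Finset.mem_univ l)
          constructor
          · positivity
          · exact pow_le_pow_right₀ hp1 hale
      rcases lt_trichotomy j i with hji | rfl | hij
      · rw [hSM.1.1 i j hji]
        exact ⟨le_refl 0, by linarith⟩
      · exact ⟨le_of_lt (hdiagB j).1, (hdiagB j).2⟩
      · obtain ⟨h1, h2⟩ := hSM.1.2 i j hij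
        exact ⟨h1, le_trans (le_of_lt h2) (hdiagB i).2⟩
    haveI : Finite ↥(Set.Icc (0:ℤ) B) := (Set.finite_Icc _ _).to_subtype
    apply Finite.of_injective (f := fun A : {A : Matrix (Fin (m + 1)) (Fin (m + 1)) ℤ //
        IsSubringMatrix A ∧
        (∀ i : Fin m, A i.castSucc i.castSucc = (p : ℤ) ^ a i) ∧
        (∀ i : Fin (m + 1), ∀ j : Fin m, (p : ℤ) ∣ A i j.castSucc) ∧
        ∀ i : Fin (m + 1), A i (Fin.last m) = 1} =>
      (fun i j => (⟨A.1 i j, (hbound A.1 A.2.1 A.2.2.1 A.2.2.2.2 i j).1,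
        (hbound A.1 A.2.1 A.2.2.1 A.2.2.2.2 i j).2⟩ : ↥(Set.Icc (0:ℤ) B)) :
        Fin (m+1) → Fin (m+1) → ↥(Set.Icc (0:ℤ) B)))
    intro A A' hAA'
    apply Subtype.ext
    funext i j
    have := congrFun (congrFun hAA' i) j
    exact Subtype.ext_iff.mp this
  -- the bijection
  set G : (Σ a : ↥Cf, {A : Matrix (Fin (m + 1)) (Fin (m + 1)) ℤ //
        IsSubringMatrix A ∧
        (∀ i : Fin m, A i.castSucc i.castSucc = (p : ℤ) ^ (a : Fin m → ℕ) i) ∧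
        (∀ i : Fin (m + 1), ∀ j : Fin m, (p : ℤ) ∣ A i j.castSucc) ∧
        ∀ i : Fin (m + 1), A i (Fin.last m) = 1}) →
      {S : Subring (Fin (m + 1) → ℤ) //
        S.toAddSubgroup.index = p ^ e ∧
        ∀ x ∈ S, ∀ i j : Fin (m + 1), (p : ℤ) ∣ x i - x j} :=
    fun s => ⟨matSubring s.2.1 s.2.2.1,
      (backward p e hp _ ((hmemCf _).mp s.1.2).2 s.2.1 s.2.2.1 s.2.2.2.1 s.2.2.2.2.1
        s.2.2.2.2.2).1,
      (backward p e hp _ ((hmemCf _).mp s.1.2).2 s.2.1 s.2.2.1 s.2.2.2.1 s.2.2.2.2.1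
        s.2.2.2.2.2).2⟩ with hG
  have hGbij : Function.Bijective G := by
    constructor
    · rintro ⟨⟨a, ha⟩, ⟨A, hA1, hA2, hA3, hA4⟩⟩ ⟨⟨b, hb⟩, ⟨B, hB1, hB2, hB3, hB4⟩⟩ hGst
      have hspan_eq : matSpan A = matSpan B := by
        have h1 := congrArg (fun S : {S : Subring (Fin (m + 1) → ℤ) //
          S.toAddSubgroup.index = p ^ e ∧
          ∀ x ∈ S, ∀ i j : Fin (m + 1), (p : ℤ) ∣ x i - x j} => S.1.toAddSubgroup) hGst
        simp only [hG] at h1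
        rwa [toAddSubgroup_matSubring, toAddSubgroup_matSubring] at h1
      have hposA : ∀ i, 0 < A i i := diag_pos_of_cond p hp a A hA2 hA4
      have hposB : ∀ i, 0 < B i i := diag_pos_of_cond p hp b B hB2 hB4
      have hAB : A = B := matrix_unique A B hA1.1 hB1.1 hposA hposB hspan_eq
      subst hAB
      have hab : a = b := by
        funext i
        have h1 := hA2 i
        have h2 := hB2 i
        rw [h1] at h2
        have h3 : ((p ^ a i : ℕ) : ℤ) = ((p ^ b i : ℕ) : ℤ) := by push_cast; exact h2
        have h4 : p ^ a i = p ^ b i := by exact_mod_cast h3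
        exact Nat.pow_right_injective hp.two_le h4
      subst hab
      rfl
    · rintro ⟨S, hidx, hirr⟩
      obtain ⟨α, A, hα1, hαsum, hSM, hdiag, hdvd, hlast, hspan⟩ :=
        forward p e hp S hidx hirr
      have haCf : α ∈ Cf := (hmemCf α).mpr ⟨hα1, hαsum⟩
      refine ⟨⟨⟨α, haCf⟩, ⟨A, hSM, hdiag, hdvd, hlast⟩⟩, ?_⟩
      apply Subtype.ext
      show matSubring A hSM = S
      apply SetLike.ext
      intro x
      show x ∈ matSpan A ↔ x ∈ S
      rw [hspan]
      exact Iff.rfl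
  haveI : ∀ a : ↥Cf, Fintype {A : Matrix (Fin (m + 1)) (Fin (m + 1)) ℤ //
        IsSubringMatrix A ∧
        (∀ i : Fin m, A i.castSucc i.castSucc = (p : ℤ) ^ (a : Fin m → ℕ) i) ∧
        (∀ i : Fin (m + 1), ∀ j : Fin m, (p : ℤ) ∣ A i j.castSucc) ∧
        ∀ i : Fin (m + 1), A i (Fin.last m) = 1} := by
    intro a
    haveI := hFibFin a
    exact Fintype.ofFinite _
  have hcard : numIrrSubrings (m + 1) p e
      = ∑ a : ↥Cf, gComp p (a : Fin m → ℕ) := by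
    have h1 : numIrrSubrings (m + 1) p e = Nat.card
        {S : Subring (Fin (m + 1) → ℤ) //
          S.toAddSubgroup.index = p ^ e ∧
          ∀ x ∈ S, ∀ i j : Fin (m + 1), (p : ℤ) ∣ x i - x j} := rfl
    rw [h1, ← Nat.card_eq_of_bijective G hGbij, Nat.card_eq_fintype_card,
      Fintype.card_sigma]
    apply Finset.sum_congr rfl
    intro a _
    rw [gComp]
    rw [Nat.card_eq_fintype_card]
  rw [hcard]
  have hcoe : (↑Cf : Set (Fin m → ℕ)) = C := by
    rw [hCf]
    exact Set.Finite.coe_toFinset hCfin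
  calc ∑ a : ↥Cf, gComp p (a : Fin m → ℕ)
      = ∑ a ∈ Cf, gComp p a := Finset.sum_coe_sort Cf (fun a => gComp p a)
    _ = ∑ᶠ α ∈ (↑Cf : Set (Fin m → ℕ)), gComp p α := (finsum_mem_coe_finset (gComp p) Cf).symm
    _ = ∑ᶠ α ∈ C, gComp p α := by rw [hcoe]
end

section
/- Let p be a prime, let α = (1, α_2, …, α_k) be a composition of a positive integer e into k ≥ 2 positive parts whose first part equals 1, and let α' = (α_2, …, α_k). Then g_α(p) = g_{α'}(p). -/
open scoped BigOperators

section Aux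

variable {m : ℕ}

/-- Extend an `(m+1)×(m+1)` matrix to an `(m+2)×(m+2)` one, with new first row
`(p, 0, …, 0, 1)` and new first column `(p, 0, …, 0)ᵀ`. -/
def bigOf (p : ℕ) (B : Matrix (Fin (m + 1)) (Fin (m + 1)) ℤ) :
    Matrix (Fin (m + 2)) (Fin (m + 2)) ℤ :=
  Matrix.of fun i j =>
    Fin.cases (Fin.cases (p : ℤ) (fun j' => if j' = Fin.last m then 1 else 0) j)
      (fun i' => Fin.cases 0 (fun j' => B i' j') j) i

@[simp] lemma bigOf_zero_zero (p : ℕ) (B : Matrix (Fin (m + 1)) (Fin (m + 1)) ℤ) :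
    bigOf p B 0 0 = (p : ℤ) := by simp [bigOf]

@[simp] lemma bigOf_zero_succ (p : ℕ) (B : Matrix (Fin (m + 1)) (Fin (m + 1)) ℤ)
    (j' : Fin (m + 1)) :
    bigOf p B 0 j'.succ = if j' = Fin.last m then 1 else 0 := by simp [bigOf]

@[simp] lemma bigOf_succ_zero (p : ℕ) (B : Matrix (Fin (m + 1)) (Fin (m + 1)) ℤ)
    (i' : Fin (m + 1)) : bigOf p B i'.succ 0 = 0 := by simp [bigOf]

@[simp] lemma bigOf_succ_succ (p : ℕ) (B : Matrix (Fin (m + 1)) (Fin (m + 1)) ℤ)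
    (i' j' : Fin (m + 1)) : bigOf p B i'.succ j'.succ = B i' j' := by simp [bigOf]

lemma bigOf_mulVec (p : ℕ) (B : Matrix (Fin (m + 1)) (Fin (m + 1)) ℤ)
    (c : Fin (m + 2) → ℤ) :
    (bigOf p B).mulVec c =
      Fin.cons ((p : ℤ) * c 0 + c (Fin.last (m + 1))) (B.mulVec (c ∘ Fin.succ)) := by
  funext i
  refine Fin.cases ?_ (fun i' => ?_) i
  · rw [Fin.cons_zero]
    simp only [Matrix.mulVec, dotProduct]
    rw [Fin.sum_univ_succ]
    simp only [bigOf_zero_zero, bigOf_zero_succ, ite_mul, one_mul, zero_mul]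
    rw [Finset.sum_ite_eq' Finset.univ (Fin.last m) (fun j' => c j'.succ)]
    simp [Fin.succ_last]
  · rw [Fin.cons_succ]
    simp only [Matrix.mulVec, dotProduct, Fin.sum_univ_succ, bigOf_succ_zero,
      bigOf_succ_succ, zero_mul, zero_add, Function.comp]

/-- `mulVec` at the last index, for an upper-triangular matrix whose last
diagonal entry is `1`. -/
lemma mulVec_last (B : Matrix (Fin (m + 1)) (Fin (m + 1)) ℤ)
    (htri : ∀ i j, j < i → B i j = 0) (hlast : B (Fin.last m) (Fin.last m) = 1)
    (d : Fin (m + 1) → ℤ) : B.mulVec d (Fin.last m) = d (Fin.last m) := by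
  simp only [Matrix.mulVec, dotProduct]
  rw [Finset.sum_eq_single (Fin.last m)]
  · rw [hlast, one_mul]
  · intro j _ hj
    rw [htri _ _ (lt_of_le_of_ne (Fin.le_last j) hj), zero_mul]
  · intro h; exact absurd (Finset.mem_univ _) h

end Aux
section Main

variable {m : ℕ}

lemma cons_comp_succ (c0 : ℤ) (d : Fin (m + 1) → ℤ) :
    (Fin.cons c0 d : Fin (m + 2) → ℤ) ∘ Fin.succ = d := by
  funext j; simp

lemma bigOf_mulVec_cons (p : ℕ) (B : Matrix (Fin (m + 1)) (Fin (m + 1)) ℤ)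
    (c0 : ℤ) (d : Fin (m + 1) → ℤ) :
    (bigOf p B).mulVec (Fin.cons c0 d) =
      Fin.cons ((p : ℤ) * c0 + d (Fin.last m)) (B.mulVec d) := by
  rw [bigOf_mulVec, cons_comp_succ, Fin.cons_zero, ← Fin.succ_last, Fin.cons_succ]

lemma lastRow (B : Matrix (Fin (m + 1)) (Fin (m + 1)) ℤ)
    (htri : ∀ i j, j < i → B i j = 0) (hlast : B (Fin.last m) (Fin.last m) = 1)
    (j : Fin (m + 1)) : B (Fin.last m) j = if j = Fin.last m then 1 else 0 := by
  split_ifs with h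
  · subst h; exact hlast
  · exact htri _ _ (lt_of_le_of_ne (Fin.le_last j) h)

lemma restrict_mulVec (A : Matrix (Fin (m + 2)) (Fin (m + 2)) ℤ)
    (hcol : ∀ i' : Fin (m + 1), A i'.succ 0 = 0) (c : Fin (m + 2) → ℤ)
    (i' : Fin (m + 1)) :
    (Matrix.of fun i j : Fin (m + 1) => A i.succ j.succ).mulVec (c ∘ Fin.succ) i' =
      A.mulVec c i'.succ := by
  simp [Matrix.mulVec, dotProduct, Fin.sum_univ_succ, hcol]

/-- Restriction preserves the counting conditions. -/
lemma restrict_mem (p : ℕ) (α' : Fin m → ℕ)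
    (A : Matrix (Fin (m + 2)) (Fin (m + 2)) ℤ)
    (hA : IsSubringMatrix A ∧
      (∀ i : Fin (m + 1), A i.castSucc i.castSucc =
        (p : ℤ) ^ (Fin.cons 1 α' : Fin (m + 1) → ℕ) i) ∧
      (∀ i : Fin (m + 2), ∀ j : Fin (m + 1), (p : ℤ) ∣ A i j.castSucc) ∧
      ∀ i : Fin (m + 2), A i (Fin.last (m + 1)) = 1) :
    IsSubringMatrix (Matrix.of fun i j : Fin (m + 1) => A i.succ j.succ) ∧
    (∀ i : Fin m, (Matrix.of fun i j : Fin (m + 1) => A i.succ j.succ) i.castSucc i.castSucc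
      = (p : ℤ) ^ α' i) ∧
    (∀ i : Fin (m + 1), ∀ j : Fin m,
      (p : ℤ) ∣ (Matrix.of fun i j : Fin (m + 1) => A i.succ j.succ) i j.castSucc) ∧
    ∀ i : Fin (m + 1), (Matrix.of fun i j : Fin (m + 1) => A i.succ j.succ) i (Fin.last m) = 1 := by
  obtain ⟨⟨⟨htri, hbnd⟩, hone, hhad⟩, hdiag, hdvd, hlastc⟩ := hA
  have hcol : ∀ i' : Fin (m + 1), A i'.succ 0 = 0 := fun i' => htri _ _ (Fin.succ_pos i')
  refine ⟨⟨⟨?_, ?_⟩, ?_, ?_⟩, ?_, ?_, ?_⟩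
  · intro i j h
    exact htri _ _ (Fin.succ_lt_succ_iff.mpr h)
  · intro i j h
    exact hbnd _ _ (Fin.succ_lt_succ_iff.mpr h)
  · refine ⟨Pi.single (Fin.last m) 1, ?_⟩
    funext i
    have : (Matrix.of fun i j : Fin (m + 1) => A i.succ j.succ).mulVec
        (Pi.single (Fin.last m) 1) i = A i.succ (Fin.last m).succ := by
      simp [Matrix.mulVec_single]
    rw [this, Fin.succ_last]
    exact hlastc i.succ
  · intro j k
    obtain ⟨c, hc⟩ := hhad j.succ k.succ
    refine ⟨c ∘ Fin.succ, ?_⟩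
    funext i
    rw [restrict_mulVec A hcol c i, hc]
    rfl
  · intro i
    have := hdiag i.succ
    rw [← Fin.succ_castSucc] at this
    simpa using this
  · intro i j
    have := hdvd i.succ j.succ
    rw [← Fin.succ_castSucc] at this
    simpa using this
  · intro i
    have := hlastc i.succ
    rw [← Fin.succ_last] at this
    simpa using this

/-- Extension preserves the counting conditions. -/
lemma bigOf_mem (p : ℕ) (hp : p.Prime) (α' : Fin m → ℕ)
    (B : Matrix (Fin (m + 1)) (Fin (m + 1)) ℤ)
    (hB : IsSubringMatrix B ∧
      (∀ i : Fin m, B i.castSucc i.castSucc = (p : ℤ) ^ α' i) ∧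
      (∀ i : Fin (m + 1), ∀ j : Fin m, (p : ℤ) ∣ B i j.castSucc) ∧
      ∀ i : Fin (m + 1), B i (Fin.last m) = 1) :
    IsSubringMatrix (bigOf p B) ∧
    (∀ i : Fin (m + 1), bigOf p B i.castSucc i.castSucc =
      (p : ℤ) ^ (Fin.cons 1 α' : Fin (m + 1) → ℕ) i) ∧
    (∀ i : Fin (m + 2), ∀ j : Fin (m + 1), (p : ℤ) ∣ bigOf p B i j.castSucc) ∧
    ∀ i : Fin (m + 2), bigOf p B i (Fin.last (m + 1)) = 1 := by
  obtain ⟨⟨⟨htri, hbnd⟩, hone, hhad⟩, hdiag, hdvd, hlastc⟩ := hB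
  have hp2 : (2 : ℤ) ≤ (p : ℤ) := by exact_mod_cast hp.two_le
  have hBll : B (Fin.last m) (Fin.last m) = 1 := hlastc _
  refine ⟨⟨⟨?_, ?_⟩, ?_, ?_⟩, ?_, ?_, ?_⟩
  · -- upper triangular
    intro i j h
    rcases Fin.eq_zero_or_eq_succ i with rfl | ⟨i', rfl⟩
    · exact absurd h (Fin.not_lt_zero j)
    rcases Fin.eq_zero_or_eq_succ j with rfl | ⟨j', rfl⟩
    · simp
    · rw [bigOf_succ_succ]
      exact htri _ _ (Fin.succ_lt_succ_iff.mp h)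
  · -- bounds
    intro i j h
    rcases Fin.eq_zero_or_eq_succ j with rfl | ⟨j', rfl⟩
    · exact absurd h (Fin.not_lt_zero i)
    rcases Fin.eq_zero_or_eq_succ i with rfl | ⟨i', rfl⟩
    · rw [bigOf_zero_succ, bigOf_zero_zero]
      split_ifs <;> constructor <;> linarith
    · rw [bigOf_succ_succ, bigOf_succ_succ]
      exact hbnd _ _ (Fin.succ_lt_succ_iff.mp h)
  · -- all-ones vector
    refine ⟨Fin.cons 0 (Pi.single (Fin.last m) 1), ?_⟩
    rw [bigOf_mulVec_cons]
    funext i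
    rcases Fin.eq_zero_or_eq_succ i with rfl | ⟨i', rfl⟩
    · simp
    · rw [Fin.cons_succ]
      have : B.mulVec (Pi.single (Fin.last m) 1) i' = B i' (Fin.last m) := by
        simp [Matrix.mulVec_single]
      rw [this, hlastc]
      rfl
  · -- Hadamard products
    intro j k
    rcases Fin.eq_zero_or_eq_succ j with rfl | ⟨j', rfl⟩
    · rcases Fin.eq_zero_or_eq_succ k with rfl | ⟨k', rfl⟩
      · refine ⟨Fin.cons (p : ℤ) 0, ?_⟩
        rw [bigOf_mulVec_cons]
        funext i
        rcases Fin.eq_zero_or_eq_succ i with rfl | ⟨i', rfl⟩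
        · simp
        · simp
      · refine ⟨Fin.cons (if k' = Fin.last m then 1 else 0) 0, ?_⟩
        rw [bigOf_mulVec_cons]
        funext i
        rcases Fin.eq_zero_or_eq_succ i with rfl | ⟨i', rfl⟩
        · simp [mul_ite]
        · simp
    rcases Fin.eq_zero_or_eq_succ k with rfl | ⟨k', rfl⟩
    · refine ⟨Fin.cons (if j' = Fin.last m then 1 else 0) 0, ?_⟩
      rw [bigOf_mulVec_cons]
      funext i
      rcases Fin.eq_zero_or_eq_succ i with rfl | ⟨i', rfl⟩
      · simp [ite_mul]
      · simp
    · obtain ⟨d, hd⟩ := hhad j' k'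
      have hdl : d (Fin.last m) = B (Fin.last m) j' * B (Fin.last m) k' := by
        have h1 := mulVec_last B htri hBll d
        rw [hd] at h1
        exact h1.symm
      refine ⟨Fin.cons 0 d, ?_⟩
      rw [bigOf_mulVec_cons, hd]
      funext i
      rcases Fin.eq_zero_or_eq_succ i with rfl | ⟨i', rfl⟩
      · rw [Fin.cons_zero, bigOf_zero_succ, bigOf_zero_succ, mul_zero, zero_add, hdl,
          lastRow B htri hBll, lastRow B htri hBll]
      · simp
  · -- diagonal
    intro i
    rcases Fin.eq_zero_or_eq_succ i with rfl | ⟨i', rfl⟩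
    · simp
    · rw [← Fin.succ_castSucc, bigOf_succ_succ, hdiag, Fin.cons_succ]
  · -- divisibility
    intro i j
    rcases Fin.eq_zero_or_eq_succ j with rfl | ⟨j', rfl⟩
    · rcases Fin.eq_zero_or_eq_succ i with rfl | ⟨i', rfl⟩
      · simp
      · simp
    · rw [← Fin.succ_castSucc]
      rcases Fin.eq_zero_or_eq_succ i with rfl | ⟨i', rfl⟩
      · rw [bigOf_zero_succ, if_neg (Fin.castSucc_lt_last j').ne]
        exact dvd_zero _
      · rw [bigOf_succ_succ]
        exact hdvd i' j'
  · -- last column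
    intro i
    rw [← Fin.succ_last]
    rcases Fin.eq_zero_or_eq_succ i with rfl | ⟨i', rfl⟩
    · rw [bigOf_zero_succ, if_pos rfl]
    · rw [bigOf_succ_succ]
      exact hlastc i'

lemma bigOf_restrict (p : ℕ) (hp : p.Prime) (α' : Fin m → ℕ)
    (A : Matrix (Fin (m + 2)) (Fin (m + 2)) ℤ)
    (hA : IsSubringMatrix A ∧
      (∀ i : Fin (m + 1), A i.castSucc i.castSucc =
        (p : ℤ) ^ (Fin.cons 1 α' : Fin (m + 1) → ℕ) i) ∧
      (∀ i : Fin (m + 2), ∀ j : Fin (m + 1), (p : ℤ) ∣ A i j.castSucc) ∧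
      ∀ i : Fin (m + 2), A i (Fin.last (m + 1)) = 1) :
    bigOf p (Matrix.of fun i j : Fin (m + 1) => A i.succ j.succ) = A := by
  obtain ⟨⟨⟨htri, hbnd⟩, hone, hhad⟩, hdiag, hdvd, hlastc⟩ := hA
  have hA00 : A 0 0 = (p : ℤ) := by
    have := hdiag 0
    simpa using this
  funext i j
  rcases Fin.eq_zero_or_eq_succ i with rfl | ⟨i', rfl⟩
  · rcases Fin.eq_zero_or_eq_succ j with rfl | ⟨j', rfl⟩
    · rw [bigOf_zero_zero, hA00]
    · rw [bigOf_zero_succ]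
      by_cases h : j' = Fin.last m
      · subst h
        rw [if_pos rfl, Fin.succ_last, hlastc]
      · obtain ⟨j'', rfl⟩ : ∃ j'' : Fin m, j' = j''.castSucc :=
          ⟨j'.castLT (Fin.val_lt_last h), by simp⟩
        rw [if_neg h, Fin.succ_castSucc]
        have hdv := hdvd 0 j''.succ
        have hlt := hbnd 0 j''.succ.castSucc (by
          rw [Fin.lt_def]; simp)
        rw [hA00] at hlt
        have h1 := Int.emod_eq_zero_of_dvd hdv
        rw [Int.emod_eq_of_lt hlt.1 hlt.2] at h1
        exact h1.symm
  · rcases Fin.eq_zero_or_eq_succ j with rfl | ⟨j', rfl⟩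
    · rw [bigOf_succ_zero]
      exact (htri _ _ (Fin.succ_pos i')).symm
    · rw [bigOf_succ_succ]
      rfl

end Main
theorem g_cons_one (p : ℕ) (hp : p.Prime) (m : ℕ) (hm : 1 ≤ m) (α' : Fin m → ℕ)
    (hpos : ∀ i, 0 < α' i) :
    gComp p (Fin.cons 1 α' : Fin (m + 1) → ℕ) = gComp p α' := by
  unfold gComp
  refine Nat.card_congr
    (Equiv.mk
      (fun A => ⟨Matrix.of fun i j : Fin (m + 1) => A.1 i.succ j.succ,
        restrict_mem p α' A.1 A.2⟩)
      (fun B => ⟨bigOf p B.1, bigOf_mem p hp α' B.1 B.2⟩) ?_ ?_)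
  · intro A
    exact Subtype.ext (bigOf_restrict p hp α' A.1 A.2)
  · intro B
    refine Subtype.ext ?_
    funext i j
    simp
end

section
/- Let p be a prime, n ≥ 2, and let α = (β, 1, 1, …, 1) be the composition of length n−1 whose first part is β and whose remaining n−2 parts all equal 1. Then: (i) if β = 2, then g_α(p) = p^{n−2}; (ii) if β ≥ 3, then g_α(p) = (n−1)·p^{n−2}. -/
open scoped BigOperators

/-!
A counted matrix is determined by its first row `(p ^ β, x, 1)`: the Hermite normal form bounds
together with `p ∣ aᵢⱼ` kill every entry above the diagonal `p` of a middle row. Testing the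
subring condition on products of columns, such a row is admissible iff `0 ≤ xᵢ < p ^ β`,
`p ∣ xᵢ`, `p ^ β ∣ xᵢ (xᵢ - p)` and `p ^ β ∣ xᵢ xⱼ` for `i ≠ j`. For `β = 2` this only says
`p ∣ xᵢ`, leaving `p` choices per entry. For `β ≥ 3` every entry is `≡ 0` or `≡ p` modulo
`p ^ (β - 1)` (again `p` choices each), and two entries `≡ p` cannot coexist because their product
is `≡ p ^ 2 (mod p ^ 3)`; so there are `p ^ (n - 2)` rows with no entry `≡ p` and `p ^ (n - 2)`
more for each position of the single such entry.
-/

namespace GComp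

open Matrix

section NumberTheory

variable {q : ℤ} {β : ℕ} {a b : ℤ}

lemma pow_dvd_mul_of_dvd_of_dvd (hβ : β ≠ 0) (ha : q ^ (β - 1) ∣ a) (hb : q ∣ b) :
    q ^ β ∣ a * b :=
  pow_sub_one_mul hβ q ▸ mul_dvd_mul ha hb

/-- Writing `a = q y`, the condition says `q ^ (β - 2) ∣ y (y - 1)`, and the coprime factors `y`
and `y - 1` cannot share the prime power `q ^ (β - 2)`. -/
lemma dvd_and_pow_dvd_mul_sub_iff (hq : Prime q) (hβ : 2 ≤ β) :
    q ∣ a ∧ q ^ β ∣ a * (a - q) ↔ q ^ (β - 1) ∣ a ∨ q ^ (β - 1) ∣ a - q := by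
  have hpow : q ^ (β - 1) = q ^ (β - 2) * q := by rw [← pow_succ]; congr 1; omega
  constructor
  · rintro ⟨⟨y, rfl⟩, h⟩
    have hy : q ^ (β - 2) ∣ y * (y - 1) := by
      rw [show q ^ β = q ^ (β - 2) * q ^ 2 by rw [← pow_add]; congr 1; omega,
        show q * y * (q * y - q) = y * (y - 1) * q ^ 2 by ring] at h
      exact (mul_dvd_mul_iff_right (pow_ne_zero 2 hq.ne_zero)).1 h
    rw [hpow, show q * y - q = (y - 1) * q by ring, mul_comm q y]
    by_cases hqy : q ∣ y
    · have hqy' : ¬ q ∣ y - 1 := fun h => hq.not_dvd_one (by simpa using dvd_sub hqy h)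
      exact Or.inl (mul_dvd_mul_right
        (((hq.coprime_iff_not_dvd.2 hqy').pow_left).dvd_of_dvd_mul_right hy) q)
    · exact Or.inr (mul_dvd_mul_right
        (((hq.coprime_iff_not_dvd.2 hqy).pow_left).dvd_of_dvd_mul_left hy) q)
  · have hqQ : q ∣ q ^ (β - 1) := dvd_pow_self q (by omega)
    rintro (h | h)
    · have hqa : q ∣ a := hqQ.trans h
      exact ⟨hqa, pow_dvd_mul_of_dvd_of_dvd (by omega) h (dvd_sub hqa dvd_rfl)⟩
    · have hqa : q ∣ a := by simpa using dvd_add (hqQ.trans h) (dvd_refl q)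
      exact ⟨hqa, mul_comm (a - q) a ▸ pow_dvd_mul_of_dvd_of_dvd (by omega) h hqa⟩

lemma not_pow_dvd_mul_of_dvd_sub (hq : Prime q) (hβ : 3 ≤ β) (ha : q ^ (β - 1) ∣ a - q)
    (hb : q ^ (β - 1) ∣ b - q) : ¬ q ^ β ∣ a * b := by
  intro h
  obtain ⟨s, hs⟩ := ha
  obtain ⟨t, ht⟩ := hb
  have hq1 : q ∣ q ^ (β - 1) := dvd_pow_self q (by omega)
  have hq2 : q ^ 2 ∣ q ^ (β - 1) := pow_dvd_pow q (by omega)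
  have h3 : q ^ 3 ∣ a * b - q ^ 2 := by
    rw [show a * b - q ^ 2 = q * q ^ (β - 1) * (s + t) + q ^ (β - 1) * q ^ (β - 1) * (s * t) by
      rw [eq_add_of_sub_eq hs, eq_add_of_sub_eq ht]; ring, show q ^ 3 = q * q ^ 2 by ring]
    exact dvd_add (dvd_mul_of_dvd_left (mul_dvd_mul_left q hq2) _)
      (dvd_mul_of_dvd_left (mul_dvd_mul hq1 hq2) _)
  have : q ^ 3 ∣ q ^ 2 := by
    simpa using dvd_sub ((pow_dvd_pow q (by omega)).trans h) h3
  exact absurd ((pow_dvd_pow_iff hq.ne_zero hq.not_isUnit).1 this) (by norm_num)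

end NumberTheory

def residueBlock (Q r : ℤ) (m : ℕ) : Finset ℤ :=
  (Finset.range m).image fun t : ℕ => r + Q * t

section ResidueBlock

variable {Q r a : ℤ} {m : ℕ}

lemma card_residueBlock (hQ : Q ≠ 0) : (residueBlock Q r m).card = m := by
  rw [residueBlock, Finset.card_image_of_injective _ fun s t h => by simpa [hQ] using h,
    Finset.card_range]

lemma dvd_sub_of_mem_residueBlock (ha : a ∈ residueBlock Q r m) : Q ∣ a - r := by
  obtain ⟨t, -, rfl⟩ := Finset.mem_image.1 ha
  exact ⟨t, by ring⟩

lemma mem_residueBlock_iff (hr : 0 ≤ r) (hrQ : r < Q) :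
    a ∈ residueBlock Q r m ↔ 0 ≤ a ∧ a < Q * m ∧ Q ∣ a - r := by
  constructor
  · intro ha
    obtain ⟨t, ht, rfl⟩ := Finset.mem_image.1 ha
    have ht : (t : ℤ) + 1 ≤ m := mod_cast Finset.mem_range.1 ht
    exact ⟨by nlinarith, by nlinarith, dvd_sub_of_mem_residueBlock ha⟩
  · rintro ⟨ha0, ham, s, hs⟩
    have hs0 : 0 ≤ s := by nlinarith
    have hsm : s < m := by nlinarith
    refine Finset.mem_image.2 ⟨s.toNat, Finset.mem_range.2 (by omega), ?_⟩
    rw [Int.toNat_of_nonneg hs0]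
    linarith

end ResidueBlock

section Counting

variable {ι α : Type*} [DecidableEq ι]

lemma card_forall_mem [Fintype ι] (S : ι → Finset α) :
    Nat.card {x : ι → α // ∀ i, x i ∈ S i} = ∏ i, (S i).card := by
  rw [← Fintype.card_piFinset, ← Nat.card_eq_finsetCard]
  exact Nat.card_congr (Equiv.subtypeEquivRight fun x => Fintype.mem_piFinset.symm)

def markedBlock (A B : Finset α) (s : Option ι) (i : ι) : Finset α :=
  if s = some i then B else A

variable {A B : Finset α}

lemma eq_some_of_mem_markedBlock (hAB : Disjoint A B) {s : Option ι} {i : ι} {y : α}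
    (hy : y ∈ markedBlock A B s i) (hB : y ∈ B) : s = some i := by
  by_contra h
  rw [markedBlock, if_neg h] at hy
  exact Finset.disjoint_left.1 hAB hy hB

lemma forall_mem_union_and_atMostOne_iff [DecidableEq α] (hAB : Disjoint A B) (x : ι → α) :
    ((∀ i, x i ∈ A ∪ B) ∧ Pairwise fun i j => ¬(x i ∈ B ∧ x j ∈ B)) ↔
      ∃ s, ∀ i, x i ∈ markedBlock A B s i := by
  constructor
  · rintro ⟨hx, hpair⟩
    by_cases h : ∃ i, x i ∈ B
    · obtain ⟨i, hi⟩ := h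
      refine ⟨some i, fun j => ?_⟩
      by_cases hji : j = i
      · subst hji; simpa [markedBlock] using hi
      · have : x j ∉ B := fun hj => hpair hji ⟨hj, hi⟩
        simpa [markedBlock, Ne.symm hji, this] using hx j
    · exact ⟨none, fun j => by simpa [markedBlock, not_exists.1 h j] using hx j⟩
  · rintro ⟨s, hs⟩
    refine ⟨fun i => ?_, fun i j hij ⟨hi, hj⟩ => hij ?_⟩
    · have := hs i
      rw [markedBlock] at this
      split_ifs at this <;> simp [this]
    · exact Option.some_injective _
        ((eq_some_of_mem_markedBlock hAB (hs i) hi).symm.trans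
          (eq_some_of_mem_markedBlock hAB (hs j) hj))

lemma pairwiseDisjoint_piFinset_markedBlock [Fintype ι] (hAB : Disjoint A B) :
    (Set.univ : Set (Option ι)).PairwiseDisjoint fun s => Fintype.piFinset (markedBlock A B s) := by
  intro s _ s' _ hss'
  refine Finset.disjoint_left.2 fun x hx hx' => ?_
  rw [Fintype.mem_piFinset] at hx hx'
  obtain ⟨i, hi⟩ : ∃ i, s = some i ∨ s' = some i := by
    rcases s with _ | i
    · rcases s' with _ | i
      exacts [absurd rfl hss', ⟨i, Or.inr rfl⟩]
    · exact ⟨i, Or.inl rfl⟩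
  have hB : x i ∈ B := by
    rcases hi with rfl | rfl
    exacts [by simpa [markedBlock] using hx i, by simpa [markedBlock] using hx' i]
  exact hss' ((eq_some_of_mem_markedBlock hAB (hx i) hB).trans
    (eq_some_of_mem_markedBlock hAB (hx' i) hB).symm)

lemma card_forall_mem_union_of_atMostOne [Fintype ι] [DecidableEq α] (hAB : Disjoint A B)
    (hcard : B.card = A.card) :
    Nat.card {x : ι → α // (∀ i, x i ∈ A ∪ B) ∧ Pairwise fun i j => ¬(x i ∈ B ∧ x j ∈ B)} =
      (Fintype.card ι + 1) * A.card ^ Fintype.card ι := by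
  have hiff (x : ι → α) : ((∀ i, x i ∈ A ∪ B) ∧ Pairwise fun i j => ¬(x i ∈ B ∧ x j ∈ B)) ↔
      x ∈ Finset.univ.biUnion fun s => Fintype.piFinset (markedBlock A B s) := by
    simpa using forall_mem_union_and_atMostOne_iff hAB x
  rw [Nat.card_congr (Equiv.subtypeEquivRight hiff), Nat.card_eq_finsetCard,
    Finset.card_biUnion (by simpa using pairwiseDisjoint_piFinset_markedBlock hAB)]
  simp [markedBlock, Fintype.card_piFinset, apply_ite Finset.card, hcard, Finset.card_univ]

end Counting

lemma col_mem_range_mulVec {m n R : Type*} [Fintype n] [DecidableEq n] [NonAssocSemiring R]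
    (A : Matrix m n R) (j : n) : (fun i => A i j) ∈ Set.range A.mulVec :=
  ⟨Pi.single j 1, funext fun i => by simp [mulVec_single]⟩

section RowMatrix

variable {N : ℕ}

lemma forall_fin_add_two {P : Fin (N + 2) → Prop} :
    (∀ i, P i) ↔ P 0 ∧ (∀ j : Fin N, P j.castSucc.succ) ∧ P (Fin.last _) := by
  rw [Fin.forall_fin_succ, Fin.forall_fin_succ', Fin.succ_last]

lemma fin_add_two_cases (i : Fin (N + 2)) :
    i = 0 ∨ (∃ j : Fin N, i = j.castSucc.succ) ∨ i = Fin.last _ :=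
  forall_fin_add_two (P := fun i => i = 0 ∨ (∃ j : Fin N, i = j.castSucc.succ) ∨ i = Fin.last _)
    |>.2 ⟨Or.inl rfl, fun j => Or.inr (Or.inl ⟨j, rfl⟩), Or.inr (Or.inr rfl)⟩ i

section Entries

variable (d q : ℤ) (x : Fin N → ℤ)

/-- With `d = p ^ β` and `q = p`, the shape of every matrix counted by
`gComp p (β, 1, …, 1)`. -/
def rowMatrix : Matrix (Fin (N + 2)) (Fin (N + 2)) ℤ :=
  Matrix.of fun i j =>
    if i = 0 then Fin.cons (α := fun _ => ℤ) d (Fin.snoc x 1) j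
    else if j = Fin.last _ then 1 else if i = j then q else 0

@[simp] lemma rowMatrix_zero_zero : rowMatrix d q x 0 0 = d := by
  simp [rowMatrix]

@[simp] lemma rowMatrix_zero_succ (j : Fin N) : rowMatrix d q x 0 j.castSucc.succ = x j := by
  simp [rowMatrix]

@[simp] lemma rowMatrix_apply_last (i : Fin (N + 2)) : rowMatrix d q x i (Fin.last _) = 1 := by
  by_cases hi : i = 0
  · simp [rowMatrix, hi, ← Fin.succ_last]
  · simp [rowMatrix, hi]

@[simp] lemma rowMatrix_succ_zero (l : Fin N) : rowMatrix d q x l.castSucc.succ 0 = 0 := by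
  simp [rowMatrix]

@[simp] lemma rowMatrix_succ_succ (l j : Fin N) :
    rowMatrix d q x l.castSucc.succ j.castSucc.succ = if l = j then q else 0 := by
  simp [rowMatrix, ← Fin.succ_last, Fin.castSucc_ne_last]

@[simp] lemma rowMatrix_last_castSucc (j : Fin (N + 1)) :
    rowMatrix d q x (Fin.last _) j.castSucc = 0 := by
  simp [rowMatrix, (Fin.castSucc_ne_last j).symm]

@[simp] lemma rowMatrix_last_zero : rowMatrix d q x (Fin.last _) 0 = 0 := by
  simpa using rowMatrix_last_castSucc d q x 0

@[simp] lemma rowMatrix_last_succ (j : Fin N) :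
    rowMatrix d q x (Fin.last _) j.castSucc.succ = 0 := by
  simpa using rowMatrix_last_castSucc d q x j.succ

variable (c : Fin (N + 2) → ℤ)

lemma mulVec_rowMatrix_apply (i : Fin (N + 2)) : (rowMatrix d q x *ᵥ c) i =
    rowMatrix d q x i 0 * c 0 +
      ∑ j : Fin N, rowMatrix d q x i j.castSucc.succ * c j.castSucc.succ + c (Fin.last _) := by
  rw [mulVec, dotProduct, Fin.sum_univ_succ, Fin.sum_univ_castSucc]
  simp [add_assoc]

lemma mulVec_rowMatrix_zero :
    (rowMatrix d q x *ᵥ c) 0 = d * c 0 + ∑ j, x j * c j.castSucc.succ + c (Fin.last _) := by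
  simp [mulVec_rowMatrix_apply]

lemma mulVec_rowMatrix_succ (l : Fin N) :
    (rowMatrix d q x *ᵥ c) l.castSucc.succ = q * c l.castSucc.succ + c (Fin.last _) := by
  simp [mulVec_rowMatrix_apply]

lemma mulVec_rowMatrix_last : (rowMatrix d q x *ᵥ c) (Fin.last _) = c (Fin.last _) := by
  simp [mulVec_rowMatrix_apply]

end Entries

variable {d q : ℤ} {x : Fin N → ℤ}

lemma isHermiteNormalForm_rowMatrix (hd : 1 < d) (hq : 1 < q) (hx : ∀ j, 0 ≤ x j ∧ x j < d) :
    IsHermiteNormalForm (rowMatrix d q x) := by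
  constructor
  · intro i j hji
    obtain rfl | ⟨l, rfl⟩ | rfl := fin_add_two_cases i <;>
    obtain rfl | ⟨k, rfl⟩ | rfl := fin_add_two_cases j <;>
    simp_all [not_lt.2 (Fin.le_last _), ne_of_gt]
  · intro i j hij
    obtain rfl | ⟨l, rfl⟩ | rfl := fin_add_two_cases i <;>
    obtain rfl | ⟨k, rfl⟩ | rfl := fin_add_two_cases j <;>
    simp_all [not_lt.2 (Fin.le_last _), ne_of_lt, zero_lt_one.trans hq]

lemma single_add_single_mem_range_mulVec_iff (hq : q ≠ 0) (s r : ℤ) (l : Fin N) :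
    Pi.single 0 s + Pi.single l.castSucc.succ (q * r) ∈ Set.range (rowMatrix d q x).mulVec ↔
      d ∣ s - x l * r := by
  constructor
  · rintro ⟨c, hc⟩
    have hlast : c (Fin.last _) = 0 := by
      simpa [mulVec_rowMatrix_last] using congrFun hc (Fin.last _)
    have hmid (k : Fin N) : c k.castSucc.succ = if k = l then r else 0 := by
      have := congrFun hc k.castSucc.succ
      rw [mulVec_rowMatrix_succ, hlast, add_zero] at this
      by_cases hk : k = l
      · subst hk; simpa [hq] using this
      · simpa [hq, hk, Pi.single_apply] using this
    have h0 := congrFun hc 0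
    rw [mulVec_rowMatrix_zero, hlast] at h0
    simp only [hmid, mul_ite, mul_zero, Finset.sum_ite_eq', Finset.mem_univ, if_true] at h0
    exact ⟨c 0, by simp at h0; linarith⟩
  · rintro ⟨t, ht⟩
    refine ⟨Pi.single 0 t + Pi.single l.castSucc.succ r, funext (forall_fin_add_two.2 ⟨?_, ?_, ?_⟩)⟩
    · simp [mulVec_rowMatrix_zero, Pi.single_apply]
      linarith
    · intro k
      by_cases hk : k = l
      · subst hk; simp [mulVec_rowMatrix_succ]
      · simp [mulVec_rowMatrix_succ, hk]
    · simp [mulVec_rowMatrix_last]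

lemma single_zero_mul_mem_range_mulVec (t : ℤ) :
    Pi.single 0 (d * t) ∈ Set.range (rowMatrix d q x).mulVec :=
  ⟨Pi.single 0 t, funext (forall_fin_add_two.2 ⟨by simp [mulVec_single], by simp [mulVec_single],
    by simp [mulVec_single]⟩)⟩

lemma col_mul_col_succ (j k : Fin N) :
    (fun i => rowMatrix d q x i j.castSucc.succ * rowMatrix d q x i k.castSucc.succ) =
      Pi.single 0 (x j * x k) + Pi.single j.castSucc.succ (q * if j = k then q else 0) :=
  funext (forall_fin_add_two.2 ⟨by simp, fun l => by by_cases hl : l = j <;> simp [hl], by simp⟩)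

lemma isSubringMatrix_rowMatrix_iff (hq : q ≠ 0) (hH : IsHermiteNormalForm (rowMatrix d q x)) :
    IsSubringMatrix (rowMatrix d q x) ↔
      (∀ j, d ∣ x j * (x j - q)) ∧ Pairwise fun j k => d ∣ x j * x k := by
  have hprod (j k : Fin N) :
      (fun i => rowMatrix d q x i j.castSucc.succ * rowMatrix d q x i k.castSucc.succ) ∈
        Set.range (rowMatrix d q x).mulVec ↔ d ∣ x j * x k - x j * if j = k then q else 0 := by
    rw [col_mul_col_succ]
    exact single_add_single_mem_range_mulVec_iff hq _ _ j
  refine ⟨fun ⟨_, _, hmul⟩ => ⟨fun j => ?_, fun j k hjk => ?_⟩, fun ⟨hdiag, hoff⟩ => ?_⟩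
  · simpa [mul_sub] using (hprod j j).1 (hmul _ _)
  · simpa [hjk] using (hprod j k).1 (hmul _ _)
  refine ⟨hH, ⟨Pi.single (Fin.last _) 1, by ext i; simp [mulVec_single]⟩, ?_⟩
  have hzero (b : Fin (N + 2)) : (fun i => rowMatrix d q x i 0 * rowMatrix d q x i b) ∈
      Set.range (rowMatrix d q x).mulVec := by
    rw [show (fun i => rowMatrix d q x i 0 * rowMatrix d q x i b) =
        Pi.single 0 (d * rowMatrix d q x 0 b) from
      funext (forall_fin_add_two.2 ⟨by simp, by simp, by simp⟩)]
    exact single_zero_mul_mem_range_mulVec _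
  refine forall_fin_add_two.2 ⟨hzero, fun j => forall_fin_add_two.2 ⟨?_, fun k => ?_, ?_⟩,
    fun b => by simpa using col_mem_range_mulVec _ b⟩
  · simpa only [mul_comm] using hzero j.castSucc.succ
  · refine (hprod j k).2 ?_
    by_cases hjk : j = k
    · subst hjk; simpa [mul_sub] using hdiag j
    · simpa [hjk] using hoff hjk
  · simpa using col_mem_range_mulVec _ j.castSucc.succ

end RowMatrix

/-- The matrices counted by `gComp p α`. -/
def IsGCompMatrix (p : ℕ) {m : ℕ} (α : Fin m → ℕ) (A : Matrix (Fin (m + 1)) (Fin (m + 1)) ℤ) :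
    Prop :=
  IsSubringMatrix A ∧
    (∀ i : Fin m, A i.castSucc i.castSucc = (p : ℤ) ^ α i) ∧
    (∀ i : Fin (m + 1), ∀ j : Fin m, (p : ℤ) ∣ A i j.castSucc) ∧
    ∀ i : Fin (m + 1), A i (Fin.last m) = 1

variable {p β N : ℕ}

lemma IsGCompMatrix.eq_rowMatrix {A : Matrix (Fin (N + 2)) (Fin (N + 2)) ℤ}
    (hA : IsGCompMatrix p (fun i : Fin (N + 1) => if (i : ℕ) = 0 then β else 1) A) :
    A = rowMatrix ((p : ℤ) ^ β) p (fun j => A 0 j.castSucc.succ) := by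
  obtain ⟨⟨⟨hlower, hupper⟩, -⟩, hdiag, hdvd, hlast⟩ := hA
  have hmid (l : Fin N) : A l.castSucc.succ l.castSucc.succ = p := by
    simpa using hdiag l.succ
  ext i j
  obtain rfl | ⟨l, rfl⟩ | rfl := fin_add_two_cases j
  · obtain rfl | ⟨k, rfl⟩ | rfl := fin_add_two_cases i
    · simpa using hdiag 0
    · simpa using hlower _ _ (Fin.succ_pos _)
    · simpa using hlower (Fin.last _) 0 (Fin.last_pos)
  · obtain rfl | ⟨k, rfl⟩ | rfl := fin_add_two_cases i
    · simp
    · rcases lt_trichotomy k l with hkl | rfl | hlk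
      · have hlt : k.castSucc.succ < l.castSucc.succ := by simpa using hkl
        obtain ⟨h0, hp⟩ := hupper _ _ hlt
        rw [hmid] at hp
        simpa [hkl.ne] using Int.eq_zero_of_dvd_of_nonneg_of_lt h0 hp (by simpa using hdvd _ l.succ)
      · simpa using hmid k
      · simpa [hlk.ne'] using hlower _ _ (by simpa using hlk)
    · simpa using hlower _ _ (by simpa using Fin.castSucc_lt_last l.succ)
  · simpa using hlast i

/-- The first rows `(p ^ β, x, 1)` of the matrices counted by `gComp p (β, 1, …, 1)`. -/
def IsAdmissibleRow (p β : ℕ) {N : ℕ} (x : Fin N → ℤ) : Prop :=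
  (∀ j, 0 ≤ x j ∧ x j < (p : ℤ) ^ β ∧ (p : ℤ) ∣ x j ∧ (p : ℤ) ^ β ∣ x j * (x j - p)) ∧
    Pairwise fun j k => (p : ℤ) ^ β ∣ x j * x k

lemma isGCompMatrix_rowMatrix_iff (hp : p.Prime) (hβ : β ≠ 0) {x : Fin N → ℤ} :
    IsGCompMatrix p (fun i : Fin (N + 1) => if (i : ℕ) = 0 then β else 1)
      (rowMatrix ((p : ℤ) ^ β) p x) ↔ IsAdmissibleRow p β x := by
  have hp1 : (1 : ℤ) < p := mod_cast hp.one_lt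
  have hp0 : (p : ℤ) ≠ 0 := by positivity
  constructor
  · rintro ⟨hsub, -, hdvd, -⟩
    have hbound (j : Fin N) : 0 ≤ x j ∧ x j < (p : ℤ) ^ β := by
      simpa using hsub.1.2 0 j.castSucc.succ (Fin.succ_pos _)
    obtain ⟨hself, hpair⟩ := (isSubringMatrix_rowMatrix_iff hp0 hsub.1).1 hsub
    exact ⟨fun j => ⟨(hbound j).1, (hbound j).2, by simpa using hdvd 0 j.succ, hself j⟩, hpair⟩
  · rintro ⟨hentry, hpair⟩
    have hH := isHermiteNormalForm_rowMatrix (one_lt_pow₀ hp1 hβ) hp1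
      fun j => ⟨(hentry j).1, (hentry j).2.1⟩
    refine ⟨(isSubringMatrix_rowMatrix_iff hp0 hH).2 ⟨fun j => (hentry j).2.2.2, hpair⟩,
      Fin.cases (by simp) (fun l => by simp), fun i => Fin.cases ?_ fun k => ?_, by simp⟩
    · obtain rfl | ⟨l, rfl⟩ | rfl := fin_add_two_cases i <;> simp [dvd_pow_self _ hβ]
    · obtain rfl | ⟨l, rfl⟩ | rfl := fin_add_two_cases i <;> simp [(hentry k).2.2.1, apply_ite]

lemma gComp_eq_card_isAdmissibleRow (hp : p.Prime) (hβ : β ≠ 0) :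
    gComp p (fun i : Fin (N + 1) => if (i : ℕ) = 0 then β else 1) =
      Nat.card {x : Fin N → ℤ // IsAdmissibleRow p β x} :=
  Nat.card_congr
    { toFun := fun A => ⟨fun j => A.1 0 j.castSucc.succ,
        (isGCompMatrix_rowMatrix_iff hp hβ).1 (IsGCompMatrix.eq_rowMatrix A.2 ▸ A.2)⟩
      invFun := fun x => ⟨rowMatrix _ _ x.1, (isGCompMatrix_rowMatrix_iff hp hβ).2 x.2⟩
      left_inv := fun A => Subtype.ext (IsGCompMatrix.eq_rowMatrix A.2).symm
      right_inv := fun _ => Subtype.ext (funext (rowMatrix_zero_succ _ _ _)) }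

section AdmissibleRows

variable {x : Fin N → ℤ}

lemma isAdmissibleRow_two_iff (hp : p.Prime) :
    IsAdmissibleRow p 2 x ↔ ∀ j, x j ∈ residueBlock p 0 p := by
  have hp0 : (0 : ℤ) < p := mod_cast hp.pos
  simp only [IsAdmissibleRow, mem_residueBlock_iff le_rfl hp0, sub_zero, ← sq]
  refine ⟨fun ⟨h, _⟩ j => ⟨(h j).1, (h j).2.1, (h j).2.2.1⟩, fun h => ⟨fun j => ?_, ?_⟩⟩
  · obtain ⟨h0, hlt, hdvd⟩ := h j
    exact ⟨h0, hlt, hdvd, sq (p : ℤ) ▸ mul_dvd_mul hdvd (dvd_sub hdvd dvd_rfl)⟩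
  · exact fun j k _ => sq (p : ℤ) ▸ mul_dvd_mul (h j).2.2 (h k).2.2

lemma card_isAdmissibleRow_two (hp : p.Prime) :
    Nat.card {x : Fin N → ℤ // IsAdmissibleRow p 2 x} = p ^ N := by
  rw [Nat.card_congr (Equiv.subtypeEquivRight fun x => isAdmissibleRow_two_iff hp),
    card_forall_mem]
  simp [card_residueBlock (Nat.cast_ne_zero.2 hp.ne_zero)]

section ThreeLe

local notation "𝒜" => residueBlock ((p : ℤ) ^ (β - 1)) 0 p
local notation "ℬ" => residueBlock ((p : ℤ) ^ (β - 1)) p p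

lemma mem_residueBlock_union_iff (hp : p.Prime) (hβ : 3 ≤ β) {a : ℤ} :
    a ∈ 𝒜 ∪ ℬ ↔ 0 ≤ a ∧ a < (p : ℤ) ^ β ∧ (p : ℤ) ∣ a ∧ (p : ℤ) ^ β ∣ a * (a - p) := by
  have hp1 : (1 : ℤ) < p := mod_cast hp.one_lt
  have hpQ : (p : ℤ) < (p : ℤ) ^ (β - 1) := by
    simpa using pow_lt_pow_right₀ hp1 (show 1 < β - 1 by omega)
  rw [Finset.mem_union, mem_residueBlock_iff le_rfl (by positivity),
    mem_residueBlock_iff (by positivity) hpQ, pow_sub_one_mul (by omega), sub_zero,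
    dvd_and_pow_dvd_mul_sub_iff (Nat.prime_iff_prime_int.1 hp) (by omega)]
  tauto

lemma pow_dvd_mul_iff_of_mem_residueBlock_union (hp : p.Prime) (hβ : 3 ≤ β) {a b : ℤ}
    (ha : a ∈ 𝒜 ∪ ℬ) (hb : b ∈ 𝒜 ∪ ℬ) :
    (p : ℤ) ^ β ∣ a * b ↔ ¬(a ∈ ℬ ∧ b ∈ ℬ) := by
  have hpZ := Nat.prime_iff_prime_int.1 hp
  refine ⟨fun h ⟨haB, hbB⟩ => not_pow_dvd_mul_of_dvd_sub hpZ hβ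
    (dvd_sub_of_mem_residueBlock haB) (dvd_sub_of_mem_residueBlock hbB) h, fun h => ?_⟩
  have hdvd {c : ℤ} (hc : c ∈ 𝒜 ∪ ℬ) : (p : ℤ) ∣ c :=
    ((mem_residueBlock_union_iff hp hβ).1 hc).2.2.1
  by_cases haB : a ∈ ℬ
  · have hbA := (Finset.mem_union.1 hb).resolve_right fun hbB => h ⟨haB, hbB⟩
    simpa [mul_comm] using pow_dvd_mul_of_dvd_of_dvd (by omega)
      (by simpa using dvd_sub_of_mem_residueBlock hbA) (hdvd ha)
  · have haA := (Finset.mem_union.1 ha).resolve_right haB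
    exact pow_dvd_mul_of_dvd_of_dvd (by omega)
      (by simpa using dvd_sub_of_mem_residueBlock haA) (hdvd hb)

lemma isAdmissibleRow_iff_of_three_le (hp : p.Prime) (hβ : 3 ≤ β) :
    IsAdmissibleRow p β x ↔ (∀ j, x j ∈ 𝒜 ∪ ℬ) ∧ Pairwise fun j k => ¬(x j ∈ ℬ ∧ x k ∈ ℬ) := by
  simp only [IsAdmissibleRow, ← mem_residueBlock_union_iff hp hβ]
  refine and_congr_right fun hx => ?_
  exact forall₂_congr fun j k => imp_congr_right fun _ =>
    pow_dvd_mul_iff_of_mem_residueBlock_union hp hβ (hx j) (hx k)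

lemma card_isAdmissibleRow_of_three_le (hp : p.Prime) (hβ : 3 ≤ β) :
    Nat.card {x : Fin N → ℤ // IsAdmissibleRow p β x} = (N + 1) * p ^ N := by
  have hQ : (p : ℤ) ^ (β - 1) ≠ 0 := pow_ne_zero _ (mod_cast hp.ne_zero)
  have hdisj : Disjoint 𝒜 ℬ := by
    refine Finset.disjoint_left.2 fun a haA haB => ?_
    have h := dvd_sub (dvd_sub_of_mem_residueBlock haA) (dvd_sub_of_mem_residueBlock haB)
    rw [sub_sub_sub_cancel_left, sub_zero] at h
    have hpZ := Nat.prime_iff_prime_int.1 hp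
    have := (pow_dvd_pow_iff hpZ.ne_zero hpZ.not_isUnit).1 (h.trans (pow_one (p : ℤ)).symm.dvd)
    omega
  rw [Nat.card_congr (Equiv.subtypeEquivRight fun x => isAdmissibleRow_iff_of_three_le hp hβ),
    card_forall_mem_union_of_atMostOne hdisj (by rw [card_residueBlock hQ, card_residueBlock hQ]),
    card_residueBlock hQ, Fintype.card_fin]

end ThreeLe

end AdmissibleRows

end GComp

theorem g_beta_ones (p n β : ℕ) (hp : p.Prime) (hn : 2 ≤ n) :
    (β = 2 →
      gComp p (fun i : Fin (n - 1) => if (i : ℕ) = 0 then β else 1) = p ^ (n - 2)) ∧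
    (3 ≤ β →
      gComp p (fun i : Fin (n - 1) => if (i : ℕ) = 0 then β else 1) =
        (n - 1) * p ^ (n - 2)) := by
  obtain ⟨N, rfl⟩ : ∃ N, n = N + 2 := ⟨n - 2, by omega⟩
  refine ⟨?_, fun hβ => ?_⟩
  · rintro rfl
    exact (GComp.gComp_eq_card_isAdmissibleRow hp two_ne_zero).trans
      (GComp.card_isAdmissibleRow_two hp)
  · exact (GComp.gComp_eq_card_isAdmissibleRow hp (by omega)).trans
      (GComp.card_isAdmissibleRow_of_three_le hp hβ)
end

section
/- Let p be a prime, let r, s ≥ 0 be integers with r + s = n − 1 ≥ 1, and let α = (2, …, 2, 1, …, 1) be the composition of length n−1 with r parts equal to 2 followed by s parts equal to 1. Then g_α(p) ≥ p^{rs}. -/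
open scoped BigOperators

def Mmat (p r s : ℕ) (f : Fin r → Fin s → Fin p) :
    Matrix (Fin (r + s + 1)) (Fin (r + s + 1)) ℤ :=
  fun i j =>
    if (j : ℕ) = r + s then 1
    else if i = j then (if (i : ℕ) < r then (p : ℤ) ^ 2 else (p : ℤ))
    else if h : (i : ℕ) < r ∧ r ≤ (j : ℕ) ∧ (j : ℕ) < r + s then
      (p : ℤ) * ((f ⟨i, h.1⟩ ⟨(j : ℕ) - r, by omega⟩ : ℕ) : ℤ)
    else 0

def emb (r s : ℕ) (j : Fin s) : Fin (r + s + 1) := ⟨r + j, by omega⟩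

variable {p r s : ℕ} {f : Fin r → Fin s → Fin p}

lemma Mmat_last (i j : Fin (r + s + 1)) (hj : (j : ℕ) = r + s) :
    Mmat p r s f i j = 1 := by
  simp [Mmat, hj]

lemma Mmat_low (i j : Fin (r + s + 1)) (hj : (j : ℕ) < r) :
    Mmat p r s f i j = if i = j then (p : ℤ) ^ 2 else 0 := by
  unfold Mmat
  rw [if_neg (by omega)]
  by_cases h : i = j
  · subst h; rw [if_pos rfl, if_pos rfl, if_pos (by omega)]
  · rw [if_neg h, if_neg h, dif_neg (by omega)]

lemma Mmat_emb (i : Fin (r + s + 1)) (hi : (i : ℕ) < r) (j : Fin s) :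
    Mmat p r s f i (emb r s j) = (p : ℤ) * ((f ⟨i, hi⟩ j : ℕ) : ℤ) := by
  unfold Mmat emb
  rw [if_neg (by simp only [Fin.val_mk]; omega),
    if_neg (by intro h; have := congrArg Fin.val h; simp only [Fin.val_mk] at this; omega),
    dif_pos ⟨hi, by simp only [Fin.val_mk]; omega⟩]
  simp

lemma Mmat_emb_mid (i : Fin (r + s + 1)) (hi : r ≤ (i : ℕ)) (j : Fin s) :
    Mmat p r s f i (emb r s j) = if i = emb r s j then (p : ℤ) else 0 := by
  unfold Mmat emb
  rw [if_neg (by simp only [Fin.val_mk]; omega)]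
  by_cases h : i = (⟨r + (j : ℕ), by omega⟩ : Fin (r + s + 1))
  · rw [if_pos h, if_pos h, if_neg (by omega)]
  · rw [if_neg h, if_neg h, dif_neg (by omega)]

lemma mulVec_Mmat (x : Fin (r + s + 1) → ℤ) (i : Fin (r + s + 1)) :
    (Mmat p r s f).mulVec x i =
      (if h : (i : ℕ) < r then
          (p : ℤ) ^ 2 * x i
            + (p : ℤ) * ∑ j : Fin s, ((f ⟨i, h⟩ j : ℕ) : ℤ) * x (emb r s j)
        else if (i : ℕ) < r + s then (p : ℤ) * x i else 0)
      + x (Fin.last (r + s)) := by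
  by_cases hi : (i : ℕ) = r + s
  · have hrow : ∀ l : Fin (r + s + 1), Mmat p r s f i l =
        if l = Fin.last (r + s) then 1 else 0 := by
      intro l
      unfold Mmat
      by_cases h1 : (l : ℕ) = r + s
      · rw [if_pos h1, if_pos (Fin.ext (by simp [h1]))]
      · rw [if_neg h1, if_neg (by intro h; apply h1; rw [← h] at *; omega),
          dif_neg (by omega), if_neg (by intro h; apply h1; rw [h]; simp)]
    rw [Matrix.mulVec, dotProduct]
    simp only [hrow, ite_mul, one_mul, zero_mul, Finset.sum_ite_eq',
      Finset.mem_univ, if_pos]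
    rw [dif_neg (by omega), if_neg (by omega), zero_add]
  · have hemb_ne_last : ∀ j : Fin s, emb r s j ≠ Fin.last (r + s) := by
      intro j h
      have := congrArg Fin.val h
      simp [emb] at this; omega
    have hi_ne_last : i ≠ Fin.last (r + s) := by
      intro h; apply hi; rw [h]; simp
    set S : Finset (Fin (r + s + 1)) :=
      insert (Fin.last (r + s)) (insert i (Finset.univ.image (emb r s))) with hS
    have hzero : ∀ l ∈ Finset.univ, l ∉ S →
        Mmat p r s f i l * x l = 0 := by
      intro l _ hl
      simp only [hS, Finset.mem_insert, Finset.mem_image, Finset.mem_univ,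
        true_and, not_or, not_exists] at hl
      obtain ⟨h1, h2, h3⟩ := hl
      have hl1 : (l : ℕ) ≠ r + s := by
        intro h; exact h1 (Fin.ext (by simp [h]))
      have hl3 : ¬(r ≤ (l : ℕ) ∧ (l : ℕ) < r + s) := by
        rintro ⟨ha, hb⟩
        exact h3 ⟨(l : ℕ) - r, by omega⟩ (Fin.ext (by simp [emb]; omega))
      unfold Mmat
      rw [if_neg hl1, if_neg (fun h => h2 h.symm), dif_neg (by tauto), zero_mul]
    rw [Matrix.mulVec, dotProduct,
      ← Finset.sum_subset (Finset.subset_univ S) hzero]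
    have hlast_notmem : Fin.last (r + s) ∉
        insert i (Finset.univ.image (emb r s)) := by
      simp only [Finset.mem_insert, Finset.mem_image, Finset.mem_univ, true_and,
        not_or, not_exists]
      exact ⟨fun h => hi_ne_last h.symm, fun j h => hemb_ne_last j h⟩
    rw [hS, Finset.sum_insert hlast_notmem, Mmat_last i _ (by simp), one_mul]
    have hinj : Function.Injective (emb r s) := by
      intro a b h
      have := congrArg Fin.val h
      simp [emb] at this
      exact Fin.ext this
    by_cases hir : (i : ℕ) < r
    · have hi_notmem : i ∉ Finset.univ.image (emb r s) := by
        simp only [Finset.mem_image, Finset.mem_univ, true_and, not_exists]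
        intro j h
        have := congrArg Fin.val h
        simp [emb] at this; omega
      rw [Finset.sum_insert hi_notmem, Finset.sum_image (fun a _ b _ h => hinj h)]
      have : Mmat p r s f i i = (p : ℤ) ^ 2 := by
        unfold Mmat
        rw [if_neg (by omega), if_pos rfl, if_pos hir]
      rw [this, dif_pos hir]
      have : ∀ j : Fin s, Mmat p r s f i (emb r s j) * x (emb r s j)
          = ((f ⟨i, hir⟩ j : ℕ) : ℤ) * x (emb r s j) * (p : ℤ) := by
        intro j; rw [Mmat_emb i hir j]; ring
      rw [Finset.sum_congr rfl fun j _ => this j, ← Finset.sum_mul]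
      ring
    · have hi_mem : i ∈ Finset.univ.image (emb r s) := by
        simp only [Finset.mem_image, Finset.mem_univ, true_and]
        exact ⟨⟨(i : ℕ) - r, by omega⟩, Fin.ext (by simp [emb]; omega)⟩
      rw [Finset.insert_eq_self.mpr hi_mem,
        Finset.sum_image (fun a _ b _ h => hinj h)]
      rw [dif_neg hir, if_pos (by omega)]
      set j0 : Fin s := ⟨(i : ℕ) - r, by omega⟩ with hj0def
      have hj0 : emb r s j0 = i := Fin.ext (by simp [emb, hj0def]; omega)
      have hterm : ∀ j : Fin s, Mmat p r s f i (emb r s j) * x (emb r s j) =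
          if j = j0 then (p : ℤ) * x i else 0 := by
        intro j
        rw [Mmat_emb_mid i (by omega)]
        by_cases hjj : j = j0
        · subst hjj; rw [if_pos hj0.symm, if_pos rfl, hj0]
        · rw [if_neg (fun h => hjj (hinj (hj0.trans h)).symm), if_neg hjj, zero_mul]
      rw [Finset.sum_congr rfl fun j _ => hterm j]
      simp only [Finset.sum_ite_eq', Finset.mem_univ, if_pos]
      ring

lemma emb_inj : Function.Injective (emb r s) := by
  intro a b h
  have := congrArg Fin.val h
  simp [emb] at this
  exact Fin.ext this

lemma one_mem : (1 : Fin (r + s + 1) → ℤ) ∈ Set.range (Mmat p r s f).mulVec := by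
  classical
  refine ⟨fun l => if (l : ℕ) = r + s then 1 else 0, funext fun i => ?_⟩
  rw [mulVec_Mmat]
  simp only [Fin.val_last, Pi.one_apply]
  by_cases h : (i : ℕ) < r
  · rw [dif_pos h, if_neg (by omega)]
    rw [Finset.sum_eq_zero (fun j _ => by
      rw [if_neg (show ¬((emb r s j : Fin (r + s + 1)) : ℕ) = r + s by
        simp [emb]; omega), mul_zero])]
    simp
  · rw [dif_neg h]
    by_cases h2 : (i : ℕ) < r + s
    · rw [if_pos h2, if_neg (by omega)]; simp
    · rw [if_neg h2]; simp

lemma col_mem (j : Fin (r + s + 1)) :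
    (fun i => Mmat p r s f i j) ∈ Set.range (Mmat p r s f).mulVec := by
  classical
  refine ⟨fun l => if l = j then 1 else 0, funext fun i => ?_⟩
  rw [mulVec_Mmat]
  by_cases hj : (j : ℕ) = r + s
  · rw [Mmat_last i j hj]
    have hxlast : (if (Fin.last (r + s) : Fin (r + s + 1)) = j then (1:ℤ) else 0) = 1 :=
      if_pos (Fin.ext (by simp [hj]))
    rw [hxlast]
    by_cases h : (i : ℕ) < r
    · rw [dif_pos h, if_neg (fun h' => by rw [h'] at h; omega), mul_zero,
        Finset.sum_eq_zero (fun j' _ => by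
          rw [if_neg (fun h' => by
            have := congrArg Fin.val h'
            simp [emb, hj] at this; omega), mul_zero]), mul_zero]
      ring
    · rw [dif_neg h]
      by_cases h2 : (i : ℕ) < r + s
      · rw [if_pos h2, if_neg (fun h' => by rw [h'] at h2; omega), mul_zero]
        ring
      · rw [if_neg h2]; ring
  · have hxlast : (if (Fin.last (r + s) : Fin (r + s + 1)) = j then (1:ℤ) else 0) = 0 :=
      if_neg (fun h' => hj (by rw [← h']; simp))
    rw [hxlast, add_zero]
    rcases lt_or_ge ((j : ℕ)) r with hjr | hjr
    · -- low column
      rw [Mmat_low i j hjr]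
      by_cases h : (i : ℕ) < r
      · rw [dif_pos h,
          Finset.sum_eq_zero (fun j' _ => by
            rw [if_neg (fun h' => by
              have := congrArg Fin.val h'
              simp [emb] at this; omega), mul_zero]),
          mul_zero, add_zero, mul_ite, mul_one, mul_zero]
      · have h1 : ¬ i = j := fun h' => by rw [h'] at h; omega
        rw [dif_neg h, if_neg h1]
        by_cases h2 : (i : ℕ) < r + s
        · rw [if_pos h2, if_neg h1, mul_zero]
        · rw [if_neg h2, if_neg h1]
    · -- middle column
      have hj2 : (j : ℕ) < r + s := by omega
      set j0 : Fin s := ⟨(j : ℕ) - r, by omega⟩ with hj0def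
      have hj0 : emb r s j0 = j := Fin.ext (by simp [emb, hj0def]; omega)
      rw [← hj0]
      by_cases h : (i : ℕ) < r
      · rw [dif_pos h, Mmat_emb i h j0,
          if_neg (fun h' => by
            have := congrArg Fin.val h'
            simp [emb] at this; omega), mul_zero, zero_add]
        have hterm : ∀ j' : Fin s,
            ((f ⟨i, h⟩ j' : ℕ) : ℤ) * (if emb r s j' = emb r s j0 then 1 else 0)
              = if j' = j0 then ((f ⟨i, h⟩ j0 : ℕ) : ℤ) else 0 := by
          intro j'
          by_cases hjj : j' = j0
          · subst hjj; simp
          · rw [if_neg (fun h' => hjj (emb_inj h')), if_neg hjj, mul_zero]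
        rw [Finset.sum_congr rfl fun j' _ => hterm j']
        simp
      · rw [dif_neg h, Mmat_emb_mid i (by omega) j0]
        by_cases h2 : (i : ℕ) < r + s
        · rw [if_pos h2, mul_ite, mul_one, mul_zero]
        · rw [if_neg h2, if_neg (fun h' => by
            have := congrArg Fin.val (h'.trans hj0)
            omega)]

lemma prod_mem_low_low {j k : Fin (r + s + 1)} (hj : (j : ℕ) < r) (hk : (k : ℕ) < r) :
    (fun i => Mmat p r s f i j * Mmat p r s f i k) ∈ Set.range (Mmat p r s f).mulVec := by
  classical
  refine ⟨fun l => if l = j ∧ j = k then (p : ℤ) ^ 2 else 0, funext fun i => ?_⟩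
  rw [mulVec_Mmat]
  rw [Mmat_low i j hj, Mmat_low i k hk,
    if_neg (show ¬(Fin.last (r + s) = j ∧ j = k) by
      rintro ⟨h', -⟩
      have := congrArg Fin.val h'
      simp only [Fin.val_last] at this
      omega), add_zero]
  by_cases h : (i : ℕ) < r
  · rw [dif_pos h]
    rw [Finset.sum_eq_zero (fun j' _ => by
      rw [if_neg (show ¬(emb r s j' = j ∧ j = k) by
        rintro ⟨h', -⟩
        have := congrArg Fin.val h'
        simp only [emb, Fin.val_mk] at this
        omega), mul_zero])]
    rw [mul_zero, add_zero]
    by_cases h1 : i = j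
    · subst h1
      by_cases h2 : i = k
      · subst h2; simp
      · rw [if_neg h2, mul_zero, if_neg (fun h' => h2 h'.2), mul_zero]
    · rw [if_neg h1, zero_mul, if_neg (fun h' => h1 h'.1), mul_zero]
  · have h1 : ¬ i = j := fun h' => by subst h'; omega
    rw [if_neg h1, zero_mul, dif_neg h]
    by_cases h2 : (i : ℕ) < r + s
    · rw [if_pos h2, if_neg (fun h' => h1 h'.1), mul_zero]
    · rw [if_neg h2]

lemma prod_mem_low_mid {j k : Fin (r + s + 1)} (hj : (j : ℕ) < r)
    (hk1 : r ≤ (k : ℕ)) (hk2 : (k : ℕ) < r + s) :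
    (fun i => Mmat p r s f i j * Mmat p r s f i k) ∈ Set.range (Mmat p r s f).mulVec := by
  classical
  set k0 : Fin s := ⟨(k : ℕ) - r, by omega⟩ with hk0def
  have hk0 : emb r s k0 = k := Fin.ext (by simp [emb, hk0def]; omega)
  set j0 : Fin r := ⟨(j : ℕ), hj⟩ with hj0def
  refine ⟨fun l => if l = j then (p : ℤ) * ((f j0 k0 : ℕ) : ℤ) else 0, funext fun i => ?_⟩
  rw [mulVec_Mmat]
  rw [Mmat_low i j hj, ← hk0,
    if_neg (show ¬ Fin.last (r + s) = j by
      intro h'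
      have := congrArg Fin.val h'
      simp only [Fin.val_last] at this
      omega), add_zero]
  by_cases h : (i : ℕ) < r
  · rw [dif_pos h]
    rw [Finset.sum_eq_zero (fun j' _ => by
      rw [if_neg (show ¬ emb r s j' = j by
        intro h'
        have := congrArg Fin.val h'
        simp only [emb, Fin.val_mk] at this
        omega), mul_zero])]
    rw [mul_zero, add_zero, Mmat_emb i h k0]
    by_cases h1 : i = j
    · subst h1
      rw [if_pos rfl, if_pos rfl]
    · rw [if_neg h1, mul_zero, if_neg h1, zero_mul]
  · have h1 : ¬ i = j := fun h' => by subst h'; omega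
    rw [dif_neg h, Mmat_emb_mid i (by omega) k0]
    by_cases h2 : (i : ℕ) < r + s
    · rw [if_pos h2, if_neg h1, mul_zero, if_neg h1, zero_mul]
    · rw [if_neg h2, if_neg h1, zero_mul]

lemma prod_mem_mid_mid {j k : Fin (r + s + 1)}
    (hj1 : r ≤ (j : ℕ)) (hj2 : (j : ℕ) < r + s)
    (hk1 : r ≤ (k : ℕ)) (hk2 : (k : ℕ) < r + s) :
    (fun i => Mmat p r s f i j * Mmat p r s f i k) ∈ Set.range (Mmat p r s f).mulVec := by
  classical
  set j0 : Fin s := ⟨(j : ℕ) - r, by omega⟩ with hj0def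
  have hj0 : emb r s j0 = j := Fin.ext (by simp [emb, hj0def]; omega)
  set k0 : Fin s := ⟨(k : ℕ) - r, by omega⟩ with hk0def
  have hk0 : emb r s k0 = k := Fin.ext (by simp [emb, hk0def]; omega)
  refine ⟨fun l => if h : (l : ℕ) < r then
      ((f ⟨l, h⟩ j0 : ℕ) : ℤ) * ((f ⟨l, h⟩ k0 : ℕ) : ℤ)
        - (if j = k then ((f ⟨l, h⟩ j0 : ℕ) : ℤ) else 0)
    else if l = j ∧ j = k then (p : ℤ) else 0, funext fun i => ?_⟩
  rw [mulVec_Mmat]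
  rw [← hj0, ← hk0]
  have hlast : (if h : ((Fin.last (r + s) : Fin (r + s + 1)) : ℕ) < r then
      ((f ⟨(Fin.last (r + s) : Fin (r + s + 1)), h⟩ j0 : ℕ) : ℤ) * ((f ⟨_, h⟩ k0 : ℕ) : ℤ)
        - (if emb r s j0 = emb r s k0 then ((f ⟨_, h⟩ j0 : ℕ) : ℤ) else 0)
    else if Fin.last (r + s) = emb r s j0 ∧ emb r s j0 = emb r s k0 then (p : ℤ) else 0) = 0 := by
    rw [dif_neg (by simp only [Fin.val_last]; omega), if_neg (fun h' => by
      have := congrArg Fin.val h'.1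
      simp only [emb, Fin.val_last, Fin.val_mk] at this
      omega)]
  rw [hlast, add_zero]
  by_cases h : (i : ℕ) < r
  · rw [dif_pos h, dif_pos h, Mmat_emb i h j0, Mmat_emb i h k0]
    have hterm : ∀ j' : Fin s,
        ((f ⟨i, h⟩ j' : ℕ) : ℤ) *
          (if h' : ((emb r s j' : Fin (r + s + 1)) : ℕ) < r then
            ((f ⟨(emb r s j' : Fin (r + s + 1)), h'⟩ j0 : ℕ) : ℤ) * ((f ⟨_, h'⟩ k0 : ℕ) : ℤ)
              - (if emb r s j0 = emb r s k0 then ((f ⟨_, h'⟩ j0 : ℕ) : ℤ) else 0)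
          else if emb r s j' = emb r s j0 ∧ emb r s j0 = emb r s k0 then (p : ℤ) else 0)
        = if j' = j0 then (if j0 = k0 then ((f ⟨i, h⟩ j0 : ℕ) : ℤ) * (p : ℤ) else 0) else 0 := by
      intro j'
      rw [dif_neg (by simp only [emb, Fin.val_mk]; omega)]
      by_cases hjj : j' = j0
      · subst hjj
        by_cases hjk : j0 = k0
        · rw [hjk]; simp
        · rw [if_neg (fun h' => hjk (emb_inj h'.2)), mul_zero, if_pos rfl, if_neg hjk]
      · rw [if_neg (fun h' => hjj (emb_inj h'.1)), mul_zero, if_neg hjj]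
    rw [Finset.sum_congr rfl fun j' _ => hterm j']
    simp only [Finset.sum_ite_eq', Finset.mem_univ, if_pos]
    by_cases hjk : j0 = k0
    · rw [hjk, if_pos rfl, if_pos rfl]; ring
    · rw [if_neg (fun h' => hjk (emb_inj h')), if_neg hjk]; ring
  · rw [dif_neg h, dif_neg h, Mmat_emb_mid i (by omega) j0, Mmat_emb_mid i (by omega) k0]
    by_cases h2 : (i : ℕ) < r + s
    · rw [if_pos h2]
      by_cases h3 : i = emb r s j0
      · by_cases h4 : i = emb r s k0
        · rw [if_pos ⟨h3, h3.symm.trans h4⟩, if_pos h3, if_pos h4]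
          try ring
        · rw [if_neg (fun h' => h4 (h'.1.trans h'.2)), mul_zero, if_neg h4, mul_zero]
      · rw [if_neg (fun h' => h3 h'.1), mul_zero, if_neg h3, zero_mul]
    · rw [if_neg h2, if_neg (show ¬ i = emb r s j0 by
        intro h'
        have := congrArg Fin.val h'
        simp only [emb, Fin.val_mk] at this
        omega), zero_mul]

lemma Mprod_mem (j k : Fin (r + s + 1)) :
    (fun i => Mmat p r s f i j * Mmat p r s f i k) ∈ Set.range (Mmat p r s f).mulVec := by
  by_cases hk : (k : ℕ) = r + s
  · have : (fun i => Mmat p r s f i j * Mmat p r s f i k)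
        = fun i => Mmat p r s f i j := funext fun i => by
      rw [Mmat_last i k hk, mul_one]
    rw [this]; exact col_mem j
  by_cases hj : (j : ℕ) = r + s
  · have : (fun i => Mmat p r s f i j * Mmat p r s f i k)
        = fun i => Mmat p r s f i k := funext fun i => by
      rw [Mmat_last i j hj, one_mul]
    rw [this]; exact col_mem k
  have hj2 : (j : ℕ) < r + s := by omega
  have hk2 : (k : ℕ) < r + s := by omega
  rcases lt_or_ge ((j : ℕ)) r with hjr | hjr
  · rcases lt_or_ge ((k : ℕ)) r with hkr | hkr
    · exact prod_mem_low_low hjr hkr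
    · exact prod_mem_low_mid hjr hkr hk2
  · rcases lt_or_ge ((k : ℕ)) r with hkr | hkr
    · have : (fun i => Mmat p r s f i j * Mmat p r s f i k)
          = fun i => Mmat p r s f i k * Mmat p r s f i j := funext fun i => mul_comm _ _
      rw [this]; exact prod_mem_low_mid hkr hjr hj2
    · exact prod_mem_mid_mid hjr hj2 hkr hk2

lemma isHNF_Mmat (hp : 2 ≤ p) : IsHermiteNormalForm (Mmat p r s f) := by
  have hp' : (2 : ℤ) ≤ (p : ℕ) := by exact_mod_cast hp
  constructor
  · intro i j hij
    have hij' : (j : ℕ) < (i : ℕ) := hij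
    have hi := i.isLt
    unfold Mmat
    rw [if_neg (by omega), if_neg (fun h' => by rw [h'] at hij'; omega),
      dif_neg (by omega)]
  · intro i j hij
    have hij' : (i : ℕ) < (j : ℕ) := hij
    have hj := j.isLt
    have hii : Mmat p r s f i i = if (i : ℕ) < r then (p : ℤ) ^ 2 else (p : ℤ) := by
      unfold Mmat
      rw [if_neg (by omega), if_pos rfl]
    rw [hii]
    by_cases hjl : (j : ℕ) = r + s
    · rw [Mmat_last i j hjl]
      constructor
      · norm_num
      · split_ifs <;> nlinarith
    · rcases lt_or_ge ((j : ℕ)) r with h1 | h1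
      · rw [Mmat_low i j h1, if_neg (fun h' => by rw [h'] at hij'; omega)]
        constructor
        · exact le_refl 0
        · split_ifs <;> nlinarith
      · set j0 : Fin s := ⟨(j : ℕ) - r, by omega⟩ with hj0def
        have hj0 : emb r s j0 = j := Fin.ext (by simp [emb, hj0def]; omega)
        by_cases h2 : (i : ℕ) < r
        · rw [← hj0, Mmat_emb i h2 j0, if_pos h2]
          have hfb : ((f ⟨i, h2⟩ j0 : ℕ) : ℤ) < (p : ℤ) := by
            exact_mod_cast (f ⟨i, h2⟩ j0).isLt
          have hf0 : (0 : ℤ) ≤ ((f ⟨i, h2⟩ j0 : ℕ) : ℤ) := Int.natCast_nonneg _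
          constructor
          · positivity
          · nlinarith
        · rw [← hj0, Mmat_emb_mid i (by omega) j0,
            if_neg (fun h' => by
              have := (h'.trans hj0)
              rw [this] at hij'; omega), if_neg h2]
          constructor
          · exact le_refl 0
          · nlinarith

lemma diag_Mmat (i : Fin (r + s)) :
    Mmat p r s f i.castSucc i.castSucc = (p : ℤ) ^ (if (i : ℕ) < r then 2 else 1) := by
  have hi := i.isLt
  unfold Mmat
  rw [if_neg (by rw [Fin.coe_castSucc]; omega), if_pos rfl, Fin.coe_castSucc]
  split_ifs
  · rfl
  · rw [pow_one]

lemma dvd_Mmat (i : Fin (r + s + 1)) (j : Fin (r + s)) :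
    (p : ℤ) ∣ Mmat p r s f i j.castSucc := by
  have hj := j.isLt
  unfold Mmat
  rw [if_neg (by rw [Fin.coe_castSucc]; omega)]
  by_cases h2 : i = j.castSucc
  · rw [if_pos h2]
    split_ifs
    · exact Dvd.intro _ (by ring)
    · exact dvd_rfl
  · rw [if_neg h2]
    by_cases h3 : (i : ℕ) < r ∧ r ≤ (j.castSucc : ℕ) ∧ (j.castSucc : ℕ) < r + s
    · rw [dif_pos h3]
      exact Dvd.intro _ rfl
    · rw [dif_neg h3]
      exact dvd_zero _

lemma isSubringMatrix_Mmat (hp : 2 ≤ p) : IsSubringMatrix (Mmat p r s f) :=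
  ⟨isHNF_Mmat hp, one_mem, fun j k => Mprod_mem j k⟩

lemma Mmat_injective (hp : 0 < p) :
    Function.Injective (fun f : Fin r → Fin s → Fin p => Mmat p r s f) := by
  intro f g h
  funext a b
  have key := congrFun (congrFun h (⟨(a : ℕ), by omega⟩ : Fin (r + s + 1))) (emb r s b)
  simp only at key
  rw [Mmat_emb _ a.isLt b, Mmat_emb _ a.isLt b] at key
  have hp' : ((p : ℕ) : ℤ) ≠ 0 := by exact_mod_cast hp.ne'
  have key2 := mul_left_cancel₀ hp' key
  have key3 : (f ⟨(a : ℕ), a.isLt⟩ b : ℕ) = (g ⟨(a : ℕ), a.isLt⟩ b : ℕ) := by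
    exact_mod_cast key2
  have key4 : f ⟨(a : ℕ), a.isLt⟩ b = g ⟨(a : ℕ), a.isLt⟩ b := Fin.ext key3
  simpa using key4

lemma entry_bounds {A : Matrix (Fin (r + s + 1)) (Fin (r + s + 1)) ℤ}
    (hA : IsSubringMatrix A)
    (hd : ∀ i : Fin (r + s), A i.castSucc i.castSucc
      = (p : ℤ) ^ (if (i : ℕ) < r then 2 else 1))
    (hl : ∀ i, A i (Fin.last (r + s)) = 1) (hp : 1 ≤ p) (i j : Fin (r + s + 1)) :
    0 ≤ A i j ∧ A i j ≤ (p : ℤ) ^ 2 := by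
  have hp' : (1 : ℤ) ≤ (p : ℕ) := by exact_mod_cast hp
  have hdiag : ∀ i : Fin (r + s + 1), 0 < A i i ∧ A i i ≤ (p : ℤ) ^ 2 := by
    intro i
    by_cases hi : (i : ℕ) = r + s
    · have : i = Fin.last (r + s) := Fin.ext (by simpa using hi)
      rw [this, hl]
      constructor
      · norm_num
      · nlinarith
    · have hi' : (i : ℕ) < r + s := by have := i.isLt; omega
      have hcast : (⟨(i : ℕ), hi'⟩ : Fin (r + s)).castSucc = i := Fin.ext rfl
      have := hd ⟨(i : ℕ), hi'⟩
      rw [hcast] at this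
      rw [this]
      constructor
      · positivity
      · split_ifs
        · exact le_refl _
        · nlinarith
  rcases lt_trichotomy i j with h | h | h
  · obtain ⟨h1, h2⟩ := hA.1.2 i j h
    exact ⟨h1, le_trans (le_of_lt h2) (hdiag i).2⟩
  · subst h
    exact ⟨le_of_lt (hdiag i).1, (hdiag i).2⟩
  · rw [hA.1.1 i j h]
    constructor
    · exact le_refl 0
    · positivity

theorem g_twos_ones_lower_bound (p r s n : ℕ) (hp : p.Prime)
    (hrs : r + s = n - 1) (hn : 1 ≤ n - 1) :
    p ^ (r * s) ≤ gComp p (fun i : Fin (r + s) => if (i : ℕ) < r then 2 else 1) := by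
  classical
  have hp2 : 2 ≤ p := hp.two_le
  unfold gComp
  haveI hfin : Finite {A : Matrix (Fin (r + s + 1)) (Fin (r + s + 1)) ℤ //
      IsSubringMatrix A ∧
      (∀ i : Fin (r + s), A i.castSucc i.castSucc
        = (p : ℤ) ^ (if (i : ℕ) < r then 2 else 1)) ∧
      (∀ i : Fin (r + s + 1), ∀ j : Fin (r + s), (p : ℤ) ∣ A i j.castSucc) ∧
      ∀ i : Fin (r + s + 1), A i (Fin.last (r + s)) = 1} := by
    apply Finite.of_injective
      (β := Matrix (Fin (r + s + 1)) (Fin (r + s + 1)) (Fin (p ^ 2 + 1)))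
      (fun A => fun i j => ⟨(A.1 i j).toNat, by
        have hb := entry_bounds A.2.1 A.2.2.1 A.2.2.2.2 (by omega) i j
        have h2 : (A.1 i j).toNat ≤ p ^ 2 := by
          rw [Int.toNat_le]
          exact_mod_cast hb.2
        omega⟩)
    intro A B h
    apply Subtype.ext
    funext i j
    have hij := congrArg Fin.val (congrFun (congrFun h i) j)
    simp only at hij
    have hA := (entry_bounds A.2.1 A.2.2.1 A.2.2.2.2 (by omega) i j).1
    have hB := (entry_bounds B.2.1 B.2.2.1 B.2.2.2.2 (by omega) i j).1
    omega
  refine le_trans ?_ (Nat.card_le_card_of_injective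
    (fun f : Fin r → Fin s → Fin p =>
      (⟨Mmat p r s f, isSubringMatrix_Mmat hp2, fun i => diag_Mmat i,
        fun i j => dvd_Mmat i j, fun i => Mmat_last i _ rfl⟩ :
      {A : Matrix (Fin (r + s + 1)) (Fin (r + s + 1)) ℤ //
        IsSubringMatrix A ∧
        (∀ i : Fin (r + s), A i.castSucc i.castSucc
          = (p : ℤ) ^ (if (i : ℕ) < r then 2 else 1)) ∧
        (∀ i : Fin (r + s + 1), ∀ j : Fin (r + s), (p : ℤ) ∣ A i j.castSucc) ∧
        ∀ i : Fin (r + s + 1), A i (Fin.last (r + s)) = 1}))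
    (fun f g h => Mmat_injective (by omega) (congrArg Subtype.val h)))
  have hcard : Fintype.card (Fin r → Fin s → Fin p) = p ^ (r * s) := by
    simp [← pow_mul, mul_comm]
  rw [Nat.card_eq_fintype_card, hcard]
end

section
/- For every prime p and every integer e ≥ 1, there exists an integer n ≥ 1 such that g_n(p^e) ≥ p^E, where E = e²/8 if e ≡ 0 (mod 4), E = (e² − 1)/8 if e is odd, and E = (e² − 4)/8 if e ≡ 2 (mod 4). -/
open scoped BigOperators

/-!
For an `r × d` matrix `B` over `𝔽_p`, split the coordinates of `ℤ^(d+r+1)` into blocks of sizes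
`d`, `r`, `1`, write `c` for the last coordinate, and let `L_B` be the set of `x` whose coordinates
are all congruent to `c` mod `p` and such that `x_k - c ≡ ∑_j B_kj (x_j - c) (mod p²)` for every
`k` in the second block. Conditions `p ∣ x_i - x_j` and `p² ∣ ℓ ⬝ᵥ x` with `ℓ ⬝ᵥ 1 = 0` are stable
under products, so `L_B` is an irreducible subring; it is the kernel of a surjection onto
`𝔽_p^d × (ℤ/p²)^r`, hence has index `p^(d+2r)`, and `B` can be read off `L_B`. Thus
`g_{d+r+1}(p^(d+2r)) ≥ p^(rd)`, and `r = ⌊(e+1)/4⌋`, `d = e - 2r` gives the exponent `E`.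
-/

open Matrix

section FormSubring

variable {R ι κ : Type*} [CommRing R] [Fintype ι]

theorem sq_dvd_dotProduct_mul {a : R} {ℓ x y : ι → R} (hℓ : ℓ ⬝ᵥ 1 = 0)
    (hx : ∀ i j, a ∣ x i - x j) (hy : ∀ i j, a ∣ y i - y j)
    (hℓx : a ^ 2 ∣ ℓ ⬝ᵥ x) (hℓy : a ^ 2 ∣ ℓ ⬝ᵥ y) : a ^ 2 ∣ ℓ ⬝ᵥ (x * y) := by
  rcases isEmpty_or_nonempty ι with _ | ⟨⟨i₀⟩⟩
  · simp [dotProduct]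
  have expand : ℓ ⬝ᵥ (x * y) = y i₀ * ℓ ⬝ᵥ x + x i₀ * ℓ ⬝ᵥ y - x i₀ * y i₀ * ℓ ⬝ᵥ 1
      + ∑ i, ℓ i * ((x i - x i₀) * (y i - y i₀)) := by
    simp only [dotProduct, Finset.mul_sum, ← Finset.sum_add_distrib, ← Finset.sum_sub_distrib]
    exact Finset.sum_congr rfl fun i _ => by simp only [Pi.mul_apply, Pi.one_apply]; ring
  rw [expand, hℓ, mul_zero, sub_zero]
  refine dvd_add (dvd_add (dvd_mul_of_dvd_right hℓx _) (dvd_mul_of_dvd_right hℓy _))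
    (Finset.dvd_sum fun i _ => dvd_mul_of_dvd_right ?_ _)
  rw [sq]
  exact mul_dvd_mul (hx i i₀) (hy i i₀)

def formSubring (a : R) (ℓ : κ → ι → R) (hℓ : ∀ k, ℓ k ⬝ᵥ 1 = 0) : Subring (ι → R) where
  carrier := {x | (∀ i j, a ∣ x i - x j) ∧ ∀ k, a ^ 2 ∣ ℓ k ⬝ᵥ x}
  zero_mem' := ⟨by simp, by simp⟩
  one_mem' := ⟨by simp, by simp [hℓ]⟩
  add_mem' {x y} hx hy := by
    refine ⟨fun i j => ?_, fun k => by simpa [dotProduct_add] using dvd_add (hx.2 k) (hy.2 k)⟩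
    simpa [add_sub_add_comm] using dvd_add (hx.1 i j) (hy.1 i j)
  neg_mem' {x} hx := by
    refine ⟨fun i j => ?_, fun k => by simpa [dotProduct_neg] using (hx.2 k).neg_right⟩
    simpa [neg_add_eq_sub] using hx.1 j i
  mul_mem' {x y} hx hy := by
    refine ⟨fun i j => ?_, fun k => sq_dvd_dotProduct_mul (hℓ k) hx.1 hy.1 (hx.2 k) (hy.2 k)⟩
    have : x i * y i - x j * y j = x i * (y i - y j) + y j * (x i - x j) := by ring
    simpa [this] using dvd_add ((hy.1 i j).mul_left _) ((hx.1 i j).mul_left _)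

theorem mem_formSubring {a : R} {ℓ : κ → ι → R} {hℓ : ∀ k, ℓ k ⬝ᵥ 1 = 0} {x : ι → R} :
    x ∈ formSubring a ℓ hℓ ↔ (∀ i j, a ∣ x i - x j) ∧ ∀ k, a ^ 2 ∣ ℓ k ⬝ᵥ x :=
  Iff.rfl

end FormSubring

section SubringOfMatrix

variable (p : ℕ) {d r : ℕ}

def blockD (j : Fin d) : Fin (d + r + 1) := (Fin.castAdd r j).castSucc

def blockR (k : Fin r) : Fin (d + r + 1) := (Fin.natAdd d k).castSucc

def matrixForm (B : Fin r → Fin d → ZMod p) (k : Fin r) : Fin (d + r + 1) → ℤ :=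
  (Pi.single (blockR k) 1 - Pi.single (Fin.last _) 1) -
    ∑ j, ((B k j).val : ℤ) • (Pi.single (blockD j) 1 - Pi.single (Fin.last _) 1)

theorem matrixForm_dotProduct (B : Fin r → Fin d → ZMod p) (k : Fin r)
    (x : Fin (d + r + 1) → ℤ) :
    matrixForm p B k ⬝ᵥ x = (x (blockR k) - x (Fin.last _)) -
      ∑ j, ((B k j).val : ℤ) * (x (blockD j) - x (Fin.last _)) := by
  simp only [matrixForm, sub_dotProduct, sum_dotProduct, smul_dotProduct, single_dotProduct,
    one_mul, smul_eq_mul]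

def subringOfMatrix (B : Fin r → Fin d → ZMod p) : Subring (Fin (d + r + 1) → ℤ) :=
  formSubring (p : ℤ) (matrixForm p B) fun k => by simp [matrixForm_dotProduct]

def residueHom (B : Fin r → Fin d → ZMod p) :
    (Fin (d + r + 1) → ℤ) →+ (Fin d → ZMod p) × (Fin r → ZMod (p ^ 2)) where
  toFun x := (fun j => ((x (blockD j) - x (Fin.last _) : ℤ) : ZMod p),
    fun k => ((matrixForm p B k ⬝ᵥ x : ℤ) : ZMod (p ^ 2)))
  map_zero' := by ext <;> simp
  map_add' x y := by ext <;> simp [dotProduct_add]; ring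

theorem ker_residueHom (B : Fin r → Fin d → ZMod p) :
    (residueHom p B).ker = (subringOfMatrix p B).toAddSubgroup := by
  ext x
  have hsq : ((p ^ 2 : ℕ) : ℤ) = (p : ℤ) ^ 2 := by push_cast; rfl
  simp only [AddMonoidHom.mem_ker, Subring.mem_toAddSubgroup, subringOfMatrix, mem_formSubring,
    residueHom, AddMonoidHom.coe_mk, ZeroHom.coe_mk, Prod.mk_eq_zero, funext_iff, Pi.zero_apply,
    ZMod.intCast_zmod_eq_zero_iff_dvd, hsq]
  refine ⟨fun ⟨hD, hR⟩ => ⟨fun i i' => ?_, hR⟩, fun ⟨hx, hR⟩ => ⟨fun j => hx _ _, hR⟩⟩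
  suffices h : ∀ i, (p : ℤ) ∣ x i - x (Fin.last _) by simpa using (h i).sub (h i')
  refine Fin.lastCases (by simp) (Fin.addCases (fun j => hD j) fun k => ?_)
  have hk := matrixForm_dotProduct p B k x
  rw [eq_sub_iff_add_eq'] at hk
  change (p : ℤ) ∣ x (blockR k) - _
  rw [← hk]
  exact dvd_add (Finset.dvd_sum fun j _ => (hD j).mul_left _)
    ((dvd_pow_self _ two_ne_zero).trans (hR k))

theorem residueHom_surjective [NeZero p] (B : Fin r → Fin d → ZMod p) :
    Function.Surjective (residueHom p B) := by
  rintro ⟨u, v⟩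
  refine ⟨Fin.snoc (Fin.append (fun j => ((u j).val : ℤ))
    (fun k => ((v k).val : ℤ) + ∑ j, ((B k j).val : ℤ) * (u j).val)) 0, ?_⟩
  ext j <;> simp only [residueHom, AddMonoidHom.coe_mk, ZeroHom.coe_mk, matrixForm_dotProduct,
    blockD, blockR, Fin.snoc_castSucc, Fin.snoc_last, Fin.append_left, Fin.append_right] <;> simp

theorem index_subringOfMatrix [NeZero p] (B : Fin r → Fin d → ZMod p) :
    (subringOfMatrix p B).toAddSubgroup.index = p ^ (d + 2 * r) := by
  rw [← ker_residueHom, AddSubgroup.index_ker, (residueHom p B).range_eq_top_of_surjective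
    (residueHom_surjective p B), AddSubgroup.card_top]
  simp [pow_add, pow_mul]

def columnWitness (B : Fin r → Fin d → ZMod p) (j : Fin d) : Fin (d + r + 1) → ℤ :=
  (p : ℤ) • Fin.snoc (Fin.append (Pi.single j 1) fun k => ((B k j).val : ℤ)) 0

theorem columnWitness_mem_subringOfMatrix_iff [NeZero p] (B C : Fin r → Fin d → ZMod p)
    (j : Fin d) : columnWitness p B j ∈ subringOfMatrix p C ↔ ∀ k, C k j = B k j := by
  have hp : (p : ℤ) ≠ 0 := Int.natCast_ne_zero.mpr (NeZero.ne p)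
  have hform : ∀ k, matrixForm p C k ⬝ᵥ columnWitness p B j =
      p * (((B k j).val : ℤ) - (C k j).val) := fun k => by
    simp only [columnWitness, dotProduct_smul, matrixForm_dotProduct, blockD, blockR,
      Fin.snoc_castSucc, Fin.snoc_last, Fin.append_left, Fin.append_right, Pi.single_apply]
    simp [mul_sub]
  have hdiff : ∀ i i', (p : ℤ) ∣ columnWitness p B j i - columnWitness p B j i' := fun i i' => by
    simp only [columnWitness, Pi.smul_apply, smul_eq_mul, ← mul_sub]
    exact dvd_mul_right _ _
  rw [subringOfMatrix, mem_formSubring, and_iff_right hdiff]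
  simp only [hform, sq, mul_dvd_mul_iff_left hp, ← ZMod.intCast_eq_intCast_iff_dvd_sub]
  simp

theorem subringOfMatrix_injective [NeZero p] :
    Function.Injective (subringOfMatrix p (d := d) (r := r)) := by
  intro B B' h
  ext k j
  have hB := (columnWitness_mem_subringOfMatrix_iff p B B j).mpr fun _ => rfl
  rw [h, columnWitness_mem_subringOfMatrix_iff] at hB
  exact (hB k).symm

end SubringOfMatrix

-- A subgroup of index `N` contains `N • ℤ^ι`, so it is determined by its image mod `N`.
theorem finite_setOf_addSubgroup_index_eq (ι : Type*) [Finite ι] {N : ℕ} (hN : N ≠ 0) :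
    {H : AddSubgroup (ι → ℤ) | H.index = N}.Finite := by
  have : NeZero N := ⟨hN⟩
  let red : (ι → ℤ) →+ (ι → ZMod N) := (Int.castAddHom (ZMod N)).compLeft ι
  have hker : ∀ H : AddSubgroup (ι → ℤ), H.index = N → red.ker ≤ H := by
    intro H hH x hx
    have hdvd : ∀ i, (N : ℤ) ∣ x i := fun i =>
      (ZMod.intCast_zmod_eq_zero_iff_dvd _ N).mp (congrFun hx i)
    choose y hy using hdvd
    have : x = N • y := funext fun i => by simp [hy i]
    rw [this, ← hH]
    exact H.nsmul_index_mem y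
  refine Set.Finite.of_finite_image (f := AddSubgroup.map red) (Set.toFinite _)
    fun H hH H' hH' h => ?_
  rw [← AddSubgroup.comap_map_eq_self (hker H hH), h,
    AddSubgroup.comap_map_eq_self (hker H' hH')]

theorem pow_mul_le_numIrrSubrings (p d r : ℕ) [NeZero p] :
    p ^ (r * d) ≤ numIrrSubrings (d + r + 1) p (d + 2 * r) := by
  have : Finite {S : Subring (Fin (d + r + 1) → ℤ) // S.toAddSubgroup.index = p ^ (d + 2 * r) ∧
      ∀ x ∈ S, ∀ i j : Fin (d + r + 1), (p : ℤ) ∣ x i - x j} :=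
    have := (finite_setOf_addSubgroup_index_eq (Fin (d + r + 1))
      (pow_ne_zero (d + 2 * r) (NeZero.ne p))).to_subtype
    Finite.of_injective (fun S => (⟨S.1.toAddSubgroup, S.2.1⟩ : {H : AddSubgroup _ | H.index = _}))
      fun S S' h => Subtype.ext (Subring.toAddSubgroup_injective (congrArg Subtype.val h))
  calc p ^ (r * d) = Nat.card (Fin r → Fin d → ZMod p) := by simp [← pow_mul, mul_comm]
    _ ≤ numIrrSubrings (d + r + 1) p (d + 2 * r) :=
      Nat.card_le_card_of_injective
        (fun B => ⟨subringOfMatrix p B, index_subringOfMatrix p B, fun _ hx => hx.1⟩)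
        fun B B' h => subringOfMatrix_injective p (congrArg Subtype.val h)

theorem exists_add_two_mul_eq_and_exponent_eq (e : ℕ) :
    ∃ d r, d + 2 * r = e ∧
      (if e % 4 = 0 then e ^ 2 / 8
       else if e % 2 = 1 then (e ^ 2 - 1) / 8
       else (e ^ 2 - 4) / 8) = r * d := by
  obtain ⟨q, t, ht, rfl⟩ : ∃ q t, t < 4 ∧ e = 4 * q + t :=
    ⟨e / 4, e % 4, Nat.mod_lt _ (by norm_num), (Nat.div_add_mod e 4).symm⟩
  interval_cases t
  · exact ⟨2 * q, q, by omega, by rw [if_pos (by omega)]; ring_nf; omega⟩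
  · exact ⟨2 * q + 1, q, by omega, by rw [if_neg (by omega), if_pos (by omega)]; ring_nf; omega⟩
  · exact ⟨2 * q + 2, q, by omega, by rw [if_neg (by omega), if_neg (by omega)]; ring_nf; omega⟩
  · exact ⟨2 * q + 1, q + 1, by omega,
      by rw [if_neg (by omega), if_pos (by omega)]; ring_nf; omega⟩

theorem max_g_lower_bound_general (p e : ℕ) (hp : p.Prime) :
    ∃ n : ℕ, 1 ≤ n ∧
      p ^ (if e % 4 = 0 then e ^ 2 / 8
           else if e % 2 = 1 then (e ^ 2 - 1) / 8
           else (e ^ 2 - 4) / 8) ≤ numIrrSubrings n p e := by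
  have : NeZero p := ⟨hp.ne_zero⟩
  obtain ⟨d, r, rfl, hE⟩ := exists_add_two_mul_eq_and_exponent_eq e
  rw [hE]
  exact ⟨d + r + 1, by omega, pow_mul_le_numIrrSubrings p d r⟩

theorem max_g_lower_bound (p e : ℕ) (hp : p.Prime) (he : 1 ≤ e) :
    ∃ n : ℕ, 1 ≤ n ∧
      p ^ (if e % 4 = 0 then e ^ 2 / 8
           else if e % 2 = 1 then (e ^ 2 - 1) / 8
           else (e ^ 2 - 4) / 8) ≤ numIrrSubrings n p e :=
  max_g_lower_bound_general p e hp
end
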